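/- arXiv:1909.09030 — 5 statements merged into one kernel-verified Lean document; each statement's English description precedes it below -/
import Mathlib

section
/- Let 𝒮 = (S_1, …, S_n) be a compatible sequence of structurally submodular separation systems inside a universe of separations U, and 𝒫 a robust set of profiles in 𝒮. For every pair P, P' of distinguishable profiles in 𝒫 let A_{P,P'} be the set of all s ∈ S_n that distinguish P and P' efficiently. Then the family of these sets A_{P,P'} splinters. -/
/-!
Let `a ∈ A_{P,P'} \ A_{Q,Q'}` and `b ∈ A_{Q,Q'} \ A_{P,P'}` cross, and let `i` and `j` be the first
levels of the sequence at which `P, P'` and `Q, Q'` are distinguished, say `i ≤ j`. Then `a` lies in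
`S_i ⊆ S_j`, so `a` can fail to distinguish `Q, Q'` efficiently only because `Q` and `Q'` orient it
in the same way, as `r` say; orient `b` as `s` with `s ∈ Q` and `s* ∈ Q'`.

Any corner `r ⊔ s'` (with `s'` an orientation of `s`) lying in `S_j` distinguishes `Q, Q'`
efficiently. By compatibility, if there is none, both corners `r* ⊔ s'` lie in `S_i`, and each of
them either distinguishes `P, P'` efficiently or has its inverse in both `P` and `P'`. In the last
case robustness, applied to the one of `P, P'` that contains `r*`, yields a corner `r ⊔ s'` in `S_j`
after all, because its other alternative would make `r` and `s` nested.
-/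

variable {U : Type*}

/-- `star` is an order-reversing involution: `s** = s` and `r ≤ s ↔ s* ≤ r*`. -/
def OrderReversingInvolution [Lattice U] (star : U → U) : Prop :=
  (∀ s : U, star (star s) = s) ∧ ∀ r s : U, r ≤ s ↔ star s ≤ star r

/-- Two separations are nested if they have comparable orientations. -/
def Nested [Lattice U] (star : U → U) (r s : U) : Prop :=
  r ≤ s ∨ r ≤ star s ∨ star r ≤ s ∨ star r ≤ star s

/-- A `*`-closed set `S` is structurally submodular if for all `r, s ∈ S` at
least one of `r ⊔ s` and `r ⊓ s` lies in `S`. -/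
def StructSubmodular [Lattice U] (S : Set U) : Prop :=
  ∀ r ∈ S, ∀ s ∈ S, r ⊔ s ∈ S ∨ r ⊓ s ∈ S

/-- `O` is an orientation of `S`: it contains, for each `s ∈ S`, exactly one
of `s` and `star s`. -/
def Orients [Lattice U] (star : U → U) (S O : Set U) : Prop :=
  O ⊆ S ∧ ∀ s ∈ S, (s ∈ O ∨ star s ∈ O) ∧ (s ∈ O → star s ∈ O → s = star s)

/-- `O` is consistent: there are no `r, s ∈ O` with `star r < s`. -/
def Consistent [Lattice U] (star : U → U) (O : Set U) : Prop :=
  ∀ r ∈ O, ∀ s ∈ O, ¬ star r < s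

/-- A profile of `S` is a consistent orientation `P` of `S` such that for all
`r, s ∈ P` we have `star r ⊓ star s ∉ P`. -/
def IsProfile [Lattice U] (star : U → U) (S P : Set U) : Prop :=
  Orients star S P ∧ Consistent star P ∧
    ∀ r ∈ P, ∀ s ∈ P, star r ⊓ star s ∉ P

/-- `s` distinguishes `P` and `P'`: one orientation of `s` lies in `P` and the
other in `P'`. -/
def Distinguishes [Lattice U] (star : U → U) (s : U) (P P' : Set U) : Prop :=
  (s ∈ P ∧ star s ∈ P') ∨ (star s ∈ P ∧ s ∈ P')

/-- The four corner separations of `a` and `b`, as a function on `Fin 4`. -/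
def corners [Lattice U] (star : U → U) (a b : U) : Fin 4 → U :=
  ![a ⊔ b, a ⊔ star b, star a ⊔ b, star a ⊔ star b]

/-- A nested (ascending) sequence of `*`-closed structurally submodular
separation systems is compatible if for all `i ≤ j`, `a ∈ S i` and `b ∈ S j`,
either `S i` contains at least two corner separations of `a` and `b`, or
`S j` contains at least three of them. -/
def Compatible [Lattice U] (star : U → U) {n : ℕ} (S : Fin (n + 1) → Set U) : Prop :=
  ∀ i j : Fin (n + 1), i ≤ j → ∀ a ∈ S i, ∀ b ∈ S j,
    (∃ k₁ k₂ : Fin 4, k₁ ≠ k₂ ∧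
      corners star a b k₁ ∈ S i ∧ corners star a b k₂ ∈ S i) ∨
    (∃ k₁ k₂ k₃ : Fin 4, k₁ ≠ k₂ ∧ k₁ ≠ k₃ ∧ k₂ ≠ k₃ ∧
      corners star a b k₁ ∈ S j ∧ corners star a b k₂ ∈ S j ∧
      corners star a b k₃ ∈ S j)

/-- `s` distinguishes `P` and `P'` efficiently in the sequence `S`: `s` lies
in the top system, distinguishes `P` and `P'`, and lies in every `S i` that
contains some separation distinguishing `P` and `P'`. -/
def EffDistSeq [Lattice U] (star : U → U) {n : ℕ} (S : Fin (n + 1) → Set U)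
    (s : U) (P P' : Set U) : Prop :=
  s ∈ S (Fin.last n) ∧ Distinguishes star s P P' ∧
    ∀ i : Fin (n + 1), (∃ t ∈ S i, Distinguishes star t P P') → s ∈ S i

/-- A set `Ps` of profiles in the sequence `S` is robust if for all
`P, Q, Q' ∈ Ps`, every `r` with `r ∈ Q ∩ Q'` and `star r ∈ P`, and every
`s ∈ S j` distinguishing `Q` and `Q'` efficiently, there is an orientation
`s'` of `s` with `star r ⊔ s' ∈ P` or `r ⊔ s' ∈ S j`. -/
def RobustSeq [Lattice U] (star : U → U) {n : ℕ} (S : Fin (n + 1) → Set U)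
    (Ps : Set (Set U)) : Prop :=
  ∀ P ∈ Ps, ∀ Q ∈ Ps, ∀ Q' ∈ Ps, ∀ r : U, r ∈ Q → r ∈ Q' → star r ∈ P →
    ∀ j : Fin (n + 1), ∀ s ∈ S j, EffDistSeq star S s Q Q' →
      ∃ s', (s' = s ∨ s' = star s) ∧ (star r ⊔ s' ∈ P ∨ r ⊔ s' ∈ S j)


/-- Two separations cross if they are not nested. -/
def Crosses [Lattice U] (star : U → U) (r s : U) : Prop := ¬ Nested star r s

/-- `c` is a corner separation of `r` and `s`: a join of orientations of `r`
and `s`, or the involution of such a join. -/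
def IsCornerSep [Lattice U] (star : U → U) (c r s : U) : Prop :=
  ∃ r' s', (r' = r ∨ r' = star r) ∧ (s' = s ∨ s' = star s) ∧
    (c = r' ⊔ s' ∨ c = star (r' ⊔ s'))

/-- A family `A` of subsets of `U` splinters if for all `i`, `j` and every
crossing pair `a ∈ A i \ A j`, `b ∈ A j \ A i`, at least one corner separation
of `a` and `b` lies in `A i ∪ A j`. -/
def Splinters [Lattice U] (star : U → U) {I : Type*} (A : I → Set U) : Prop :=
  ∀ i j : I, ∀ a ∈ A i, a ∉ A j → ∀ b ∈ A j, b ∉ A i → Crosses star a b →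
    ∃ c, IsCornerSep star c a b ∧ c ∈ A i ∪ A j

def IsOrientationOf [Lattice U] (star : U → U) (x a : U) : Prop := x = a ∨ x = star a

def DistinguishingLevels [Lattice U] (star : U → U) {n : ℕ} (S : Fin (n + 1) → Set U)
    (P P' : Set U) : Set (Fin (n + 1)) :=
  {i | ∃ t ∈ S i, Distinguishes star t P P'}

section Separations

variable [Lattice U] {star : U → U} {T T' P P' Q Q' : Set U} {a b c r s x y : U}

theorem OrderReversingInvolution.star_star (hstar : OrderReversingInvolution star) (x : U) :
    star (star x) = x :=
  hstar.1 x

theorem OrderReversingInvolution.antitone (hstar : OrderReversingInvolution star) :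
    Antitone star :=
  fun x y h => (hstar.2 x y).1 h

theorem OrderReversingInvolution.star_sup (hstar : OrderReversingInvolution star) (x y : U) :
    star (x ⊔ y) = star x ⊓ star y := by
  refine le_antisymm (le_inf (hstar.antitone le_sup_left) (hstar.antitone le_sup_right)) ?_
  have hle : ∀ z, star x ⊓ star y ≤ star z → z ≤ star (star x ⊓ star y) := fun z hz => by
    simpa only [hstar.star_star] using hstar.antitone hz
  simpa only [hstar.star_star] using
    hstar.antitone (sup_le (hle x inf_le_left) (hle y inf_le_right))

theorem IsOrientationOf.self : IsOrientationOf star a a := Or.inl rfl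

theorem IsOrientationOf.star_self : IsOrientationOf star (star a) a := Or.inr rfl

theorem IsOrientationOf.inverse (hstar : OrderReversingInvolution star)
    (hx : IsOrientationOf star x a) : IsOrientationOf star (star x) a := by
  rcases hx with rfl | rfl
  exacts [.star_self, Or.inl (hstar.star_star a)]

theorem IsOrientationOf.trans (hstar : OrderReversingInvolution star)
    (hxy : IsOrientationOf star x y) (hya : IsOrientationOf star y a) :
    IsOrientationOf star x a := by
  rcases hxy with rfl | rfl
  exacts [hya, hya.inverse hstar]

theorem IsOrientationOf.mem (hT : ∀ t ∈ T, star t ∈ T) (hx : IsOrientationOf star x a)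
    (ha : a ∈ T) : x ∈ T := by
  rcases hx with rfl | rfl
  exacts [ha, hT a ha]

theorem nested_iff_exists_le :
    Nested star a b ↔ ∃ x y, IsOrientationOf star x a ∧ IsOrientationOf star y b ∧ x ≤ y := by
  constructor
  · rintro (h | h | h | h)
    exacts [⟨a, b, .self, .self, h⟩, ⟨a, star b, .self, .star_self, h⟩,
      ⟨star a, b, .star_self, .self, h⟩, ⟨star a, star b, .star_self, .star_self, h⟩]
  · rintro ⟨x, y, rfl | rfl, rfl | rfl, h⟩ <;> simp only [Nested, h, true_or, or_true]

theorem Nested.of_isOrientationOf (hstar : OrderReversingInvolution star)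
    (h : Nested star x y) (hx : IsOrientationOf star x a) (hy : IsOrientationOf star y b) :
    Nested star a b := by
  obtain ⟨x', y', hx', hy', hle⟩ := nested_iff_exists_le.1 h
  exact nested_iff_exists_le.2 ⟨x', y', hx'.trans hstar hx, hy'.trans hstar hy, hle⟩

theorem Nested.symm (hstar : OrderReversingInvolution star) (h : Nested star a b) :
    Nested star b a := by
  obtain ⟨x, y, hx, hy, hle⟩ := nested_iff_exists_le.1 h
  exact nested_iff_exists_le.2
    ⟨star y, star x, hy.inverse hstar, hx.inverse hstar, hstar.antitone hle⟩

theorem Crosses.symm (hstar : OrderReversingInvolution star) (h : Crosses star a b) :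
    Crosses star b a :=
  fun h' => h (h'.symm hstar)

theorem Distinguishes.symm (h : Distinguishes star c P P') : Distinguishes star c P' P := by
  unfold Distinguishes at *
  tauto

theorem Distinguishes.inverse (hstar : OrderReversingInvolution star)
    (h : Distinguishes star c P P') : Distinguishes star (star c) P P' := by
  unfold Distinguishes at *
  rw [hstar.star_star]
  exact h.symm

theorem Distinguishes.of_isOrientationOf (hstar : OrderReversingInvolution star)
    (h : Distinguishes star a P P') (hx : IsOrientationOf star x a) :
    Distinguishes star x P P' := by
  rcases hx with rfl | rfl
  exacts [h, h.inverse hstar]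

theorem Distinguishes.exists_isOrientationOf (hstar : OrderReversingInvolution star)
    (h : Distinguishes star a P P') : ∃ x, IsOrientationOf star x a ∧ x ∈ P ∧ star x ∈ P' := by
  rcases h with ⟨h, h'⟩ | ⟨h, h'⟩
  exacts [⟨a, .self, h, h'⟩, ⟨star a, .star_self, h, by rwa [hstar.star_star]⟩]

theorem Orients.star_mem_of_not_distinguishes (hP' : Orients star T' P') (hc : c ∈ T')
    (hcP : star c ∈ P) (hnd : ¬ Distinguishes star c P P') : star c ∈ P' :=
  (hP'.2 c hc).1.resolve_left fun h => hnd (Or.inr ⟨hcP, h⟩)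

theorem Orients.le_star_of_sup_mem (hstar : OrderReversingInvolution star)
    (hP : Orients star T P) (h : x ⊔ y ∈ P) (h' : star (x ⊔ y) ∈ P) : x ≤ star y :=
  calc x ≤ x ⊔ y := le_sup_left
    _ = star (x ⊔ y) := (hP.2 _ (hP.1 h)).2 h h'
    _ = star x ⊓ star y := hstar.star_sup x y
    _ ≤ star y := inf_le_right

theorem exists_isOrientationOf_mem_of_not_distinguishes (hQ : Orients star T Q)
    (hQ' : Orients star T' Q') (ha : a ∈ T) (ha' : a ∈ T') (hnd : ¬ Distinguishes star a Q Q') :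
    ∃ x, IsOrientationOf star x a ∧ x ∈ Q ∧ x ∈ Q' := by
  rcases (hQ.2 a ha).1 with h | h <;> rcases (hQ'.2 a ha').1 with h' | h'
  · exact ⟨a, .self, h, h'⟩
  · exact absurd (Or.inl ⟨h, h'⟩) hnd
  · exact absurd (Or.inr ⟨h, h'⟩) hnd
  · exact ⟨star a, .star_self, h, h'⟩

theorem IsProfile.mem_of_le (hstar : OrderReversingInvolution star) (hP : IsProfile star T P)
    (hc : c ∈ T) (hx : x ∈ P) (hle : c ≤ x) : c ∈ P := by
  rcases hle.eq_or_lt with rfl | hlt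
  · exact hx
  refine (hP.1.2 c hc).1.resolve_right fun h => hP.2.1 (star c) h x hx ?_
  rwa [hstar.star_star]

theorem IsProfile.sup_mem (hstar : OrderReversingInvolution star) (hP : IsProfile star T P)
    (hx : x ∈ P) (hy : y ∈ P) (hxy : x ⊔ y ∈ T) : x ⊔ y ∈ P :=
  (hP.1.2 _ hxy).1.resolve_right fun h => hP.2.2 x hx y hy (hstar.star_sup x y ▸ h)

theorem IsProfile.distinguishes_sup (hstar : OrderReversingInvolution star)
    (hQ : IsProfile star T Q) (hQ' : IsProfile star T' Q') (hr : r ∈ Q) (hs : s ∈ Q)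
    (hs' : star s ∈ Q') (hT : r ⊔ s ∈ T) (hT' : star (r ⊔ s) ∈ T') :
    Distinguishes star (r ⊔ s) Q Q' :=
  Or.inl ⟨hQ.sup_mem hstar hr hs hT,
    hQ'.mem_of_le hstar hT' hs' (hstar.star_sup r s ▸ inf_le_right)⟩

end Separations

section Sequences

variable [Lattice U] {star : U → U} {n : ℕ} {S : Fin (n + 1) → Set U} {Ps : Set (Set U)}
  {P P' Q Q' : Set U} {a b c r s : U} {i j p : Fin (n + 1)}

theorem distinguishingLevels_comm (P P' : Set U) :
    DistinguishingLevels star S P P' = DistinguishingLevels star S P' P := by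
  ext i
  exact ⟨fun ⟨t, ht, hd⟩ => ⟨t, ht, hd.symm⟩, fun ⟨t, ht, hd⟩ => ⟨t, ht, hd.symm⟩⟩

theorem IsProfile.mem_distinguishingLevels_left (hstar : OrderReversingInvolution star)
    (hP : IsProfile star (S p) P) (h : Distinguishes star c P P') :
    p ∈ DistinguishingLevels star S P P' := by
  obtain ⟨x, hx, hxP, -⟩ := h.exists_isOrientationOf hstar
  exact ⟨x, hP.1.1 hxP, h.of_isOrientationOf hstar hx⟩

theorem IsProfile.mem_distinguishingLevels_right (hstar : OrderReversingInvolution star)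
    (hP' : IsProfile star (S p) P') (h : Distinguishes star c P P') :
    p ∈ DistinguishingLevels star S P P' :=
  distinguishingLevels_comm P' P ▸ hP'.mem_distinguishingLevels_left hstar h.symm

theorem EffDistSeq.exists_isLeast (h : EffDistSeq star S c P P') :
    ∃ i, IsLeast (DistinguishingLevels star S P P') i :=
  ⟨_, isLeast_csInf ⟨Fin.last n, c, h.1, h.2.1⟩⟩

theorem EffDistSeq.symm (h : EffDistSeq star S c P P') : EffDistSeq star S c P' P :=
  ⟨h.1, h.2.1.symm, fun m ⟨t, ht, hd⟩ => h.2.2 m ⟨t, ht, hd.symm⟩⟩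

theorem EffDistSeq.of_isOrientationOf (hstar : OrderReversingInvolution star)
    (hclosed : ∀ i, ∀ s ∈ S i, star s ∈ S i) (h : EffDistSeq star S c P P')
    (hx : IsOrientationOf star r c) : EffDistSeq star S r P P' :=
  ⟨hx.mem (hclosed _) h.1, h.2.1.of_isOrientationOf hstar hx,
    fun m hm => hx.mem (hclosed m) (h.2.2 m hm)⟩

theorem effDistSeq_of_mem (hmono : Monotone S) (hc : c ∈ S i)
    (hd : Distinguishes star c P P') (hi : i ∈ lowerBounds (DistinguishingLevels star S P P')) :
    EffDistSeq star S c P P' :=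
  ⟨hmono (Fin.le_last i) hc, hd, fun _ hm => hmono (hi hm) hc⟩

theorem Compatible.exists_sup_mem_or (hcomp : Compatible star S) (hmono : Monotone S)
    (hij : i ≤ j) (hr : r ∈ S i) (hs : s ∈ S j) :
    (∃ y, IsOrientationOf star y s ∧ r ⊔ y ∈ S j) ∨
      (star r ⊔ s ∈ S i ∧ star r ⊔ star s ∈ S i) := by
  have ofCorner : ∀ k : Fin 4, k < 2 → corners star r s k ∈ S j →
      ∃ y, IsOrientationOf star y s ∧ r ⊔ y ∈ S j := by
    intro k hk hkj
    fin_cases k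
    exacts [⟨s, .self, hkj⟩, ⟨star s, .star_self, hkj⟩, absurd hk (by decide),
      absurd hk (by decide)]
  rcases hcomp i j hij r hr s hs with
    ⟨k₁, k₂, hne, h₁, h₂⟩ | ⟨k₁, k₂, k₃, h₁₂, h₁₃, h₂₃, h₁, h₂, h₃⟩
  · rcases (by omega : k₁ < 2 ∨ k₂ < 2 ∨ (k₁ = 2 ∧ k₂ = 3) ∨ (k₁ = 3 ∧ k₂ = 2)) with
      hk | hk | ⟨rfl, rfl⟩ | ⟨rfl, rfl⟩
    · exact Or.inl (ofCorner k₁ hk (hmono hij h₁))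
    · exact Or.inl (ofCorner k₂ hk (hmono hij h₂))
    · exact Or.inr ⟨h₁, h₂⟩
    · exact Or.inr ⟨h₂, h₁⟩
  · rcases (by omega : k₁ < 2 ∨ k₂ < 2 ∨ k₃ < 2) with hk | hk | hk
    exacts [Or.inl (ofCorner k₁ hk h₁), Or.inl (ofCorner k₂ hk h₂), Or.inl (ofCorner k₃ hk h₃)]

theorem effDistSeq_sup_of_mem (hstar : OrderReversingInvolution star) (hmono : Monotone S)
    (hclosed : ∀ i, ∀ s ∈ S i, star s ∈ S i) {q q' : Fin (n + 1)}
    (hQ : IsProfile star (S q) Q) (hQ' : IsProfile star (S q') Q')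
    (hj : IsLeast (DistinguishingLevels star S Q Q') j)
    (hrQ : r ∈ Q) (hrQ' : r ∈ Q') (hsQ : s ∈ Q) (hsQ' : star s ∈ Q') {y : U}
    (hy : IsOrientationOf star y s) (hmem : r ⊔ y ∈ S j) :
    EffDistSeq star S (r ⊔ y) Q Q' := by
  have hs : Distinguishes star s Q Q' := Or.inl ⟨hsQ, hsQ'⟩
  have hq : r ⊔ y ∈ S q := hmono (hj.2 (hQ.mem_distinguishingLevels_left hstar hs)) hmem
  have hq' : r ⊔ y ∈ S q' := hmono (hj.2 (hQ'.mem_distinguishingLevels_right hstar hs)) hmem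
  refine effDistSeq_of_mem hmono hmem ?_ hj.2
  rcases hy with rfl | rfl
  · exact hQ.distinguishes_sup hstar hQ' hrQ hsQ hsQ' hq (hclosed _ _ hq')
  · refine (hQ'.distinguishes_sup hstar hQ hrQ' hsQ' ?_ hq' (hclosed _ _ hq)).symm
    rwa [hstar.star_star]

theorem exists_effDistSeq_or_sup_mem_of_robust (hstar : OrderReversingInvolution star)
    (hmono : Monotone S) (hclosed : ∀ i, ∀ s ∈ S i, star s ∈ S i)
    (hprof : ∀ P ∈ Ps, ∃ i, IsProfile star (S i) P) (hrobust : RobustSeq star S Ps)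
    (hP : P ∈ Ps) (hP' : P' ∈ Ps) (hQ : Q ∈ Ps) (hQ' : Q' ∈ Ps)
    (hi : IsLeast (DistinguishingLevels star S P P') i)
    (hrP : Distinguishes star r P P') (hrQ : r ∈ Q) (hrQ' : r ∈ Q')
    (hs : EffDistSeq star S s Q Q') (hsj : s ∈ S j) (hrs : ¬ Nested star r s)
    (h₁ : star r ⊔ s ∈ S i) (h₂ : star r ⊔ star s ∈ S i) :
    ∃ y, IsOrientationOf star y s ∧ (EffDistSeq star S (star r ⊔ y) P P' ∨ r ⊔ y ∈ S j) := by
  obtain ⟨p, hPp⟩ := hprof P hP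
  obtain ⟨p', hPp'⟩ := hprof P' hP'
  have hip : i ≤ p := hi.2 (hPp.mem_distinguishingLevels_left hstar hrP)
  have hip' : i ≤ p' := hi.2 (hPp'.mem_distinguishingLevels_right hstar hrP)
  have corner : ∀ y, star r ⊔ y ∈ S i → EffDistSeq star S (star r ⊔ y) P P' ∨
      (star (star r ⊔ y) ∈ P ∧ star (star r ⊔ y) ∈ P') := by
    intro y hy
    by_cases hd : Distinguishes star (star r ⊔ y) P P'
    · exact Or.inl (effDistSeq_of_mem hmono hy hd hi.2)
    have hle : star (star r ⊔ y) ≤ r := by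
      rw [hstar.star_sup, hstar.star_star]
      exact inf_le_left
    right
    rcases hrP with ⟨hr, -⟩ | ⟨-, hr⟩
    · have hcP := hPp.mem_of_le hstar (hclosed p _ (hmono hip hy)) hr hle
      exact ⟨hcP, hPp'.1.star_mem_of_not_distinguishes (hmono hip' hy) hcP hd⟩
    · have hcP' := hPp'.mem_of_le hstar (hclosed p' _ (hmono hip' hy)) hr hle
      exact ⟨hPp.1.star_mem_of_not_distinguishes (hmono hip hy) hcP' (hd ∘ .symm), hcP'⟩
  rcases corner s h₁ with h | ⟨h₁P, h₁P'⟩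
  · exact ⟨s, .self, Or.inl h⟩
  rcases corner (star s) h₂ with h | ⟨h₂P, h₂P'⟩
  · exact ⟨star s, .star_self, Or.inl h⟩
  obtain ⟨X, hX, hrX, h₁X, h₂X⟩ : ∃ X ∈ Ps, star r ∈ X ∧ star (star r ⊔ s) ∈ X ∧
      star (star r ⊔ star s) ∈ X := by
    rcases hrP with ⟨-, hr⟩ | ⟨hr, -⟩
    exacts [⟨P', hP', hr, h₁P', h₂P'⟩, ⟨P, hP, hr, h₁P, h₂P⟩]
  obtain ⟨y, hy, hyX | hyj⟩ := hrobust X hX Q hQ Q' hQ' r hrQ hrQ' hrX j s hsj hs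
  · obtain ⟨x, hXx⟩ := hprof X hX
    have hle : star r ≤ star y :=
      hXx.1.le_star_of_sup_mem hstar hyX (by rcases hy with rfl | rfl <;> assumption)
    exact (hrs (nested_iff_exists_le.2
      ⟨_, _, .star_self, IsOrientationOf.inverse hstar hy, hle⟩)).elim
  · exact ⟨y, hy, Or.inr hyj⟩

theorem exists_effDistSeq_sup_of_compatible (hstar : OrderReversingInvolution star)
    (hmono : Monotone S) (hclosed : ∀ i, ∀ s ∈ S i, star s ∈ S i) (hcomp : Compatible star S)
    (hprof : ∀ P ∈ Ps, ∃ i, IsProfile star (S i) P) (hrobust : RobustSeq star S Ps)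
    (hP : P ∈ Ps) (hP' : P' ∈ Ps) (hQ : Q ∈ Ps) (hQ' : Q' ∈ Ps)
    (hi : IsLeast (DistinguishingLevels star S P P') i)
    (hj : IsLeast (DistinguishingLevels star S Q Q') j) (hij : i ≤ j)
    (hri : r ∈ S i) (hrP : Distinguishes star r P P') (hrQ : r ∈ Q) (hrQ' : r ∈ Q')
    (hsQ : s ∈ Q) (hsQ' : star s ∈ Q') (hs : EffDistSeq star S s Q Q')
    (hrs : ¬ Nested star r s) :
    ∃ x y, IsOrientationOf star x r ∧ IsOrientationOf star y s ∧
      (EffDistSeq star S (x ⊔ y) P P' ∨ EffDistSeq star S (x ⊔ y) Q Q') := by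
  obtain ⟨q, hQq⟩ := hprof Q hQ
  obtain ⟨q', hQq'⟩ := hprof Q' hQ'
  have hsj : s ∈ S j := hs.2.2 j hj.1
  have ofSupMem : ∀ y, IsOrientationOf star y s → r ⊔ y ∈ S j → ∃ x y, IsOrientationOf star x r ∧
      IsOrientationOf star y s ∧
        (EffDistSeq star S (x ⊔ y) P P' ∨ EffDistSeq star S (x ⊔ y) Q Q') :=
    fun y hy hyj => ⟨r, y, .self, hy, Or.inr
      (effDistSeq_sup_of_mem hstar hmono hclosed hQq hQq' hj hrQ hrQ' hsQ hsQ' hy hyj)⟩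
  rcases hcomp.exists_sup_mem_or hmono hij hri hsj with ⟨y, hy, hyj⟩ | ⟨h₁, h₂⟩
  · exact ofSupMem y hy hyj
  obtain ⟨y, hy, h | hyj⟩ := exists_effDistSeq_or_sup_mem_of_robust hstar hmono hclosed hprof
    hrobust hP hP' hQ hQ' hi hrP hrQ hrQ' hs hsj hrs h₁ h₂
  · exact ⟨star r, y, .star_self, hy, Or.inl h⟩
  · exact ofSupMem y hy hyj

theorem exists_effDistSeq_sup_of_le (hstar : OrderReversingInvolution star)
    (hmono : Monotone S) (hclosed : ∀ i, ∀ s ∈ S i, star s ∈ S i) (hcomp : Compatible star S)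
    (hprof : ∀ P ∈ Ps, ∃ i, IsProfile star (S i) P) (hrobust : RobustSeq star S Ps)
    (hP : P ∈ Ps) (hP' : P' ∈ Ps) (hQ : Q ∈ Ps) (hQ' : Q' ∈ Ps)
    (ha : EffDistSeq star S a P P') (haQ : ¬ EffDistSeq star S a Q Q')
    (hb : EffDistSeq star S b Q Q')
    (hi : IsLeast (DistinguishingLevels star S P P') i)
    (hj : IsLeast (DistinguishingLevels star S Q Q') j) (hij : i ≤ j) (hab : Crosses star a b) :
    ∃ x y, IsOrientationOf star x a ∧ IsOrientationOf star y b ∧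
      (EffDistSeq star S (x ⊔ y) P P' ∨ EffDistSeq star S (x ⊔ y) Q Q') := by
  obtain ⟨q, hQq⟩ := hprof Q hQ
  obtain ⟨q', hQq'⟩ := hprof Q' hQ'
  have hai : a ∈ S i := ha.2.2 i hi.1
  have hjq : j ≤ q := hj.2 (hQq.mem_distinguishingLevels_left hstar hb.2.1)
  have hjq' : j ≤ q' := hj.2 (hQq'.mem_distinguishingLevels_right hstar hb.2.1)
  have hnd : ¬ Distinguishes star a Q Q' := fun hd =>
    haQ (effDistSeq_of_mem hmono hai hd fun _ hm => hij.trans (hj.2 hm))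
  obtain ⟨r, hra, hrQ, hrQ'⟩ := exists_isOrientationOf_mem_of_not_distinguishes hQq.1 hQq'.1
    (hmono (hij.trans hjq) hai) (hmono (hij.trans hjq') hai) hnd
  obtain ⟨s, hsb, hsQ, hsQ'⟩ := hb.2.1.exists_isOrientationOf hstar
  obtain ⟨x, y, hx, hy, h⟩ := exists_effDistSeq_sup_of_compatible hstar hmono hclosed hcomp
    hprof hrobust hP hP' hQ hQ' hi hj hij (hra.mem (hclosed i) hai)
    (ha.2.1.of_isOrientationOf hstar hra) hrQ hrQ' hsQ hsQ'
    (hb.of_isOrientationOf hstar hclosed hsb)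
    fun hrs => hab (hrs.of_isOrientationOf hstar hra hsb)
  exact ⟨x, y, hx.trans hstar hra, hy.trans hstar hsb, h⟩

end Sequences

theorem sequence_efficient_distinguishers_splinter_general [Lattice U]
    (star : U → U) (hstar : OrderReversingInvolution star)
    {n : ℕ} (S : Fin (n + 1) → Set U)
    (hmono : ∀ i j : Fin (n + 1), i ≤ j → S i ⊆ S j)
    (hclosed : ∀ i, ∀ s ∈ S i, star s ∈ S i)
    (hcomp : Compatible star S)
    (Ps : Set (Set U)) (hprof : ∀ P ∈ Ps, ∃ i, IsProfile star (S i) P)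
    (hrobust : RobustSeq star S Ps) :
    Splinters star
      (fun pp : {pp : Set U × Set U // pp.1 ∈ Ps ∧ pp.2 ∈ Ps ∧
          ∃ s ∈ S (Fin.last n), Distinguishes star s pp.1 pp.2} =>
        {s | EffDistSeq star S s pp.1.1 pp.1.2}) := by
  have hmono : Monotone S := fun i j hij => hmono i j hij
  rintro ⟨⟨P, P'⟩, hP, hP', _⟩ ⟨⟨Q, Q'⟩, hQ, hQ', _⟩ a ha haQ b hb hbP hab
  obtain ⟨i, hi⟩ := EffDistSeq.exists_isLeast ha
  obtain ⟨j, hj⟩ := EffDistSeq.exists_isLeast hb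
  rcases le_total i j with hij | hji
  · obtain ⟨x, y, hx, hy, h⟩ := exists_effDistSeq_sup_of_le hstar hmono hclosed hcomp hprof
      hrobust hP hP' hQ hQ' ha haQ hb hi hj hij hab
    exact ⟨x ⊔ y, ⟨x, y, hx, hy, Or.inl rfl⟩, h⟩
  · obtain ⟨x, y, hx, hy, h⟩ := exists_effDistSeq_sup_of_le hstar hmono hclosed hcomp hprof
      hrobust hQ hQ' hP hP' hb hbP ha hj hi hji (hab.symm hstar)
    exact ⟨x ⊔ y, ⟨y, x, hy, hx, Or.inl (sup_comm x y)⟩, h.symm⟩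

/-- For a compatible sequence `S` of structurally submodular separation
systems and a robust set `Ps` of profiles in `S`, the family of the sets
`A_{P,P'}` of separations in the top system `S (Fin.last n)` distinguishing a
pair of distinguishable profiles of `Ps` efficiently splinters. -/
theorem sequence_efficient_distinguishers_splinter [Lattice U] [Fintype U]
    (star : U → U) (hstar : OrderReversingInvolution star)
    {n : ℕ} (S : Fin (n + 1) → Set U)
    (hmono : ∀ i j : Fin (n + 1), i ≤ j → S i ⊆ S j)
    (hclosed : ∀ i, ∀ s ∈ S i, star s ∈ S i)
    (hsub : ∀ i, StructSubmodular (S i))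
    (hcomp : Compatible star S)
    (Ps : Set (Set U)) (hprof : ∀ P ∈ Ps, ∃ i, IsProfile star (S i) P)
    (hrobust : RobustSeq star S Ps) :
    Splinters star
      (fun pp : {pp : Set U × Set U // pp.1 ∈ Ps ∧ pp.2 ∈ Ps ∧
          ∃ s ∈ S (Fin.last n), Distinguishes star s pp.1 pp.2} =>
        {s | EffDistSeq star S s pp.1.1 pp.1.2}) :=
  sequence_efficient_distinguishers_splinter_general star hstar S hmono hclosed hcomp Ps hprof
    hrobust
end

section
/- Let r and s be two crossing clique separations of a finite graph G with |r| ≤ |s|. Then there are orientations r⃗ = (A,B) of r and s⃗ = (C,D) of s such that the corner separations r⃖ ∧ s⃖ = (B ∩ D, A ∪ C), r⃖ ∧ s⃗ = (B ∩ C, A ∪ D) and r⃗ ∧ s⃖ = (A ∩ D, B ∪ C) are clique separations with |r⃖ ∧ s⃖| ≤ |r|, |r⃖ ∧ s⃗| ≤ |r| and |r⃗ ∧ s⃖| ≤ |s|. Moreover, if |r⃖ ∧ s⃖| = |r| = |s|, then r⃗ ∧ s⃗ = (A ∩ C, B ∪ D) is also a clique separation with |r⃗ ∧ s⃗| ≤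 |r|. -/
variable {V : Type*} [Fintype V] [DecidableEq V]

/-- An oriented separation-candidate of a graph on `V`: a pair of vertex sets. -/
abbrev GSep (V : Type*) := Finset V × Finset V

/-- The involution `(A,B) ↦ (B,A)`. -/
def sepInv (p : GSep V) : GSep V := (p.2, p.1)

/-- The partial order `(A,B) ≤ (C,D)` iff `A ⊆ C` and `B ⊇ D`. -/
def sepLE (p q : GSep V) : Prop := p.1 ⊆ q.1 ∧ q.2 ⊆ p.2

/-- Strict version of `sepLE`. -/
def sepLT (p q : GSep V) : Prop := sepLE p q ∧ p ≠ q

/-- The join `(A,B) ∨ (C,D) = (A ∪ C, B ∩ D)`. -/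
def sepJoin (p q : GSep V) : GSep V := (p.1 ∪ q.1, p.2 ∩ q.2)

/-- The meet `(A,B) ∧ (C,D) = (A ∩ C, B ∪ D)`. -/
def sepMeet (p q : GSep V) : GSep V := (p.1 ∩ q.1, p.2 ∪ q.2)

/-- The order `|(A,B)| = |A ∩ B|`. -/
def sepOrder (p : GSep V) : ℕ := (p.1 ∩ p.2).card

/-- `(A,B)` is a separation of `G`: `A ∪ B = V` and `G` has no edge between
`A \ B` and `B \ A`. -/
def IsSep (G : SimpleGraph V) (p : GSep V) : Prop :=
  p.1 ∪ p.2 = Finset.univ ∧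
    ∀ a b : V, G.Adj a b → a ∈ p.1 → a ∉ p.2 → b ∈ p.2 → b ∉ p.1 → False

/-- Two separations are nested if they have `sepLE`-comparable orientations. -/
def sepNested (p q : GSep V) : Prop :=
  sepLE p q ∨ sepLE p (sepInv q) ∨ sepLE (sepInv p) q ∨ sepLE (sepInv p) (sepInv q)

/-- `c` is a corner separation of `p` and `q`: a join of orientations of `p`
and `q`, or the involution of such a join. -/
def sepIsCorner (c p q : GSep V) : Prop :=
  ∃ p' q', (p' = p ∨ p' = sepInv p) ∧ (q' = q ∨ q' = sepInv q) ∧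
    (c = sepJoin p' q' ∨ c = sepInv (sepJoin p' q'))

/-- `(A,B)` is a clique separation of `G`: a separation whose separator
`A ∩ B` induces a complete subgraph. -/
def IsCliqueSep (G : SimpleGraph V) (p : GSep V) : Prop :=
  IsSep G p ∧ G.IsClique ↑(p.1 ∩ p.2)

/-!
A clique separator cannot be split by another separation, so the separator of `s` lies on one
side `A` of `r` and the separator of `r` on one side `C` of `s`. With these orientations every
vertex of the separator of a corner lies in the separator of `r` or of `s`, and the inclusions
`A ∩ B ⊆ C`, `C ∩ D ⊆ A` cut this down to the separator of the single separation whose order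
bounds the corner. The last corner has separator inside `(A ∩ B) ∪ (C ∩ D)`, and the order
hypotheses force `A ∩ B = C ∩ D`.
-/

section

variable {V : Type*} [DecidableEq V]

def separator (p : GSep V) : Finset V := p.1 ∩ p.2

theorem separator_sepInv (p : GSep V) : separator (sepInv p) = separator p :=
  Finset.inter_comm _ _

theorem separator_sepMeet_comm (p q : GSep V) :
    separator (sepMeet p q) = separator (sepMeet q p) := by
  simp only [separator, sepMeet, Finset.inter_comm p.1, Finset.union_comm p.2]

theorem separator_sepMeet_subset (p q : GSep V) :
    separator (sepMeet p q) ⊆ separator p ∪ separator q := by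
  intro v
  simp only [separator, sepMeet, Finset.mem_inter, Finset.mem_union]
  tauto

theorem separator_sepMeet_sepInv_subset {p q : GSep V} (h : separator q ⊆ p.1) :
    separator (sepMeet (sepInv p) q) ⊆ separator p := by
  intro v hv
  simp only [separator, sepMeet, sepInv, Finset.mem_inter, Finset.mem_union] at hv ⊢
  obtain ⟨⟨hp₂, hq₁⟩, hp₁ | hq₂⟩ := hv
  · exact ⟨hp₁, hp₂⟩
  · exact ⟨h (Finset.mem_inter.2 ⟨hq₁, hq₂⟩), hp₂⟩

end

section Graph

variable {G : SimpleGraph V} {p q : GSep V}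

theorem IsSep.mem_or_mem (hp : IsSep G p) (v : V) : v ∈ p.1 ∨ v ∈ p.2 :=
  Finset.mem_union.1 (hp.1 ▸ Finset.mem_univ v)

theorem IsSep.inv (hp : IsSep G p) : IsSep G (sepInv p) :=
  ⟨by rw [sepInv, Finset.union_comm, hp.1], fun a b hab ha hna hb hnb =>
    hp.2 b a hab.symm hb hnb ha hna⟩

theorem IsSep.meet (hp : IsSep G p) (hq : IsSep G q) : IsSep G (sepMeet p q) := by
  refine ⟨Finset.eq_univ_of_forall fun v => ?_, fun a b hab ha hna _ hnb => ?_⟩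
  · have := hp.mem_or_mem v
    have := hq.mem_or_mem v
    simp only [sepMeet, Finset.mem_union, Finset.mem_inter]
    tauto
  · simp only [sepMeet, Finset.mem_union, Finset.mem_inter, not_or, not_and] at ha hna hnb
    by_cases hb : b ∈ p.1
    · exact hq.2 a b hab ha.2 hna.2 ((hq.mem_or_mem b).resolve_left (hnb hb)) (hnb hb)
    · exact hp.2 a b hab ha.1 hna.1 ((hp.mem_or_mem b).resolve_left hb) hb

theorem IsSep.subset_or_subset_of_isClique (hp : IsSep G p) {S : Finset V}
    (hS : G.IsClique (S : Set V)) : S ⊆ p.1 ∨ S ⊆ p.2 := by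
  by_contra! h
  obtain ⟨⟨x, hxS, hx₁⟩, ⟨y, hyS, hy₂⟩⟩ := And.imp Finset.not_subset.1 Finset.not_subset.1 h
  have hx₂ := (hp.mem_or_mem x).resolve_left hx₁
  have hy₁ := (hp.mem_or_mem y).resolve_right hy₂
  exact hp.2 y x (hS hyS hxS (by rintro rfl; exact hx₁ hy₁)) hy₁ hy₂ hx₂ hx₁

theorem IsCliqueSep.inv (hp : IsCliqueSep G p) : IsCliqueSep G (sepInv p) :=
  ⟨hp.1.inv, show G.IsClique ↑(separator (sepInv p)) from (separator_sepInv p).symm ▸ hp.2⟩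

theorem IsCliqueSep.exists_orientation_subset_fst (hp : IsCliqueSep G p) {S : Finset V}
    (hS : G.IsClique (S : Set V)) :
    ∃ p', (p' = p ∨ p' = sepInv p) ∧ IsCliqueSep G p' ∧ separator p' = separator p ∧
      S ⊆ p'.1 := by
  rcases hp.1.subset_or_subset_of_isClique hS with h | h
  · exact ⟨p, .inl rfl, hp, rfl, h⟩
  · exact ⟨sepInv p, .inr rfl, hp.inv, separator_sepInv p, h⟩

theorem IsCliqueSep.of_separator_subset (hq : IsCliqueSep G q) (hp : IsSep G p)
    (h : separator p ⊆ separator q) : IsCliqueSep G p ∧ sepOrder p ≤ sepOrder q :=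
  ⟨⟨hp, hq.2.subset (Finset.coe_subset.2 h)⟩, Finset.card_le_card h⟩

theorem IsCliqueSep.corners_of_separator_subset {r s : GSep V} (hr : IsCliqueSep G r)
    (hs : IsCliqueSep G s) (hrs : separator r ⊆ s.1) (hsr : separator s ⊆ r.1) :
    (IsCliqueSep G (sepMeet (sepInv r) (sepInv s)) ∧
        sepOrder (sepMeet (sepInv r) (sepInv s)) ≤ sepOrder r) ∧
      (IsCliqueSep G (sepMeet (sepInv r) s) ∧
        sepOrder (sepMeet (sepInv r) s) ≤ sepOrder r) ∧
      (IsCliqueSep G (sepMeet r (sepInv s)) ∧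
        sepOrder (sepMeet r (sepInv s)) ≤ sepOrder s) ∧
      (sepOrder (sepMeet (sepInv r) (sepInv s)) = sepOrder r →
        sepOrder r = sepOrder s →
        IsCliqueSep G (sepMeet r s) ∧
          sepOrder (sepMeet r s) ≤ sepOrder r) := by
  have h₁ : separator (sepMeet (sepInv r) (sepInv s)) ⊆ separator r :=
    separator_sepMeet_sepInv_subset (by rwa [separator_sepInv])
  have h₁' : separator (sepMeet (sepInv r) (sepInv s)) ⊆ separator s := by
    rw [separator_sepMeet_comm]
    exact separator_sepMeet_sepInv_subset (by rwa [separator_sepInv])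
  have h₂ : separator (sepMeet (sepInv r) s) ⊆ separator r :=
    separator_sepMeet_sepInv_subset hsr
  have h₃ : separator (sepMeet r (sepInv s)) ⊆ separator s := by
    rw [separator_sepMeet_comm]
    exact separator_sepMeet_sepInv_subset hrs
  refine ⟨hr.of_separator_subset (hr.inv.1.meet hs.inv.1) h₁,
    hr.of_separator_subset (hr.inv.1.meet hs.1) h₂,
    hs.of_separator_subset (hr.1.meet hs.inv.1) h₃, fun h₀ hord => ?_⟩
  have hcorner : separator (sepMeet (sepInv r) (sepInv s)) = separator r :=
    Finset.eq_of_subset_of_card_le h₁ h₀.ge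
  have hsep : separator r = separator s :=
    Finset.eq_of_subset_of_card_le (hcorner ▸ h₁') hord.ge
  refine hr.of_separator_subset (hr.1.meet hs.1) ?_
  simpa only [hsep, Finset.union_self] using separator_sepMeet_subset r s

end Graph

theorem clique_sep_corners_general (G : SimpleGraph V) (r s : GSep V)
    (hr : IsCliqueSep G r) (hs : IsCliqueSep G s) :
    ∃ r' s' : GSep V, (r' = r ∨ r' = sepInv r) ∧ (s' = s ∨ s' = sepInv s) ∧
      (IsCliqueSep G (sepMeet (sepInv r') (sepInv s')) ∧
        sepOrder (sepMeet (sepInv r') (sepInv s')) ≤ sepOrder r) ∧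
      (IsCliqueSep G (sepMeet (sepInv r') s') ∧
        sepOrder (sepMeet (sepInv r') s') ≤ sepOrder r) ∧
      (IsCliqueSep G (sepMeet r' (sepInv s')) ∧
        sepOrder (sepMeet r' (sepInv s')) ≤ sepOrder s) ∧
      (sepOrder (sepMeet (sepInv r') (sepInv s')) = sepOrder r →
        sepOrder r = sepOrder s →
        IsCliqueSep G (sepMeet r' s') ∧
          sepOrder (sepMeet r' s') ≤ sepOrder r) := by
  obtain ⟨r', hr'r, hr', hsepr, hsr'⟩ := hr.exists_orientation_subset_fst hs.2
  obtain ⟨s', hs's, hs', hseps, hrs'⟩ := hs.exists_orientation_subset_fst hr.2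
  have hordr : sepOrder r' = sepOrder r := congrArg Finset.card hsepr
  have hords : sepOrder s' = sepOrder s := congrArg Finset.card hseps
  refine ⟨r', s', hr'r, hs's, ?_⟩
  rw [← hordr, ← hords]
  exact hr'.corners_of_separator_subset hs' (hsepr ▸ hrs') (hseps ▸ hsr')

/-- **Corner separations of crossing clique separations.** -/
theorem clique_sep_corners (G : SimpleGraph V) (r s : GSep V)
    (hr : IsCliqueSep G r) (hs : IsCliqueSep G s)
    (hcross : ¬ sepNested r s) (hord : sepOrder r ≤ sepOrder s) :
    ∃ r' s' : GSep V, (r' = r ∨ r' = sepInv r) ∧ (s' = s ∨ s' = sepInv s) ∧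
      (IsCliqueSep G (sepMeet (sepInv r') (sepInv s')) ∧
        sepOrder (sepMeet (sepInv r') (sepInv s')) ≤ sepOrder r) ∧
      (IsCliqueSep G (sepMeet (sepInv r') s') ∧
        sepOrder (sepMeet (sepInv r') s') ≤ sepOrder r) ∧
      (IsCliqueSep G (sepMeet r' (sepInv s')) ∧
        sepOrder (sepMeet r' (sepInv s')) ≤ sepOrder s) ∧
      (sepOrder (sepMeet (sepInv r') (sepInv s')) = sepOrder r →
        sepOrder r = sepOrder s →
        IsCliqueSep G (sepMeet r' s') ∧
          sepOrder (sepMeet r' s') ≤ sepOrder r) :=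
  clique_sep_corners_general G r s hr hs
end

section
/- For every finite graph G there is a nested set N of clique separations of G which efficiently distinguishes all the distinguishable profiles of clique separations of G: for every two distinguishable profiles P, P' of clique separations there is a clique separation in N that distinguishes P and P' and has minimum order among all clique separations of G distinguishing them. -/
/-!
The nested set is built greedily, one pair of distinguishable profiles at a time. Given a nested
set `N` and profiles `P`, `P'`, take among the efficient distinguishers of `P` and `P'` one that
crosses the fewest elements of `N`. Suppose it, `s`, crossed some `r ∈ N`. The separator of `r` is
a clique, so it lies on one side of `s`, say in `s.2` with `s ∈ P`. Then the corners `r ∧ s` and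
`r* ∧ s` are clique separations of order at most `|s|` below `s`, hence in `P`; they cannot both
lie in `P'`, because the meet of their inverses is `s* ∈ P'`. So one of them efficiently
distinguishes `P` and `P'`, and, being a corner, it is nested with `r` and with every separation
nested with both `r` and `s`: it crosses fewer elements of `N` than `s` does.
-/

variable {V : Type*} [Fintype V] [DecidableEq V]

/-- A profile of clique separations of `G` of order `k`: a consistent
orientation `P` of the set of clique separations of order `< k` such that for
all `r, s ∈ P` the meet `(sepInv r) ∧ (sepInv s)` is not in `P`. -/
def CliqueProfile (G : SimpleGraph V) (k : ℕ) (P : Set (GSep V)) : Prop :=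
  (∀ p ∈ P, IsCliqueSep G p ∧ sepOrder p < k) ∧
  (∀ p : GSep V, IsCliqueSep G p → sepOrder p < k →
    (p ∈ P ∨ sepInv p ∈ P) ∧ (p ∈ P → sepInv p ∈ P → p = sepInv p)) ∧
  (∀ r ∈ P, ∀ s ∈ P, ¬ sepLT (sepInv r) s) ∧
  (∀ r ∈ P, ∀ s ∈ P, sepMeet (sepInv r) (sepInv s) ∉ P)

/-- The clique separation `p` distinguishes the profiles `P` and `P'`. -/
def cliqueDistinguishes (G : SimpleGraph V) (p : GSep V)
    (P P' : Set (GSep V)) : Prop :=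
  IsCliqueSep G p ∧ ((p ∈ P ∧ sepInv p ∈ P') ∨ (sepInv p ∈ P ∧ p ∈ P'))

/-- The clique separation `p` distinguishes `P` and `P'` efficiently: it does
so and has minimum order among all clique separations of `G` distinguishing
`P` and `P'`. -/
def cliqueEffDist (G : SimpleGraph V) (p : GSep V)
    (P P' : Set (GSep V)) : Prop :=
  cliqueDistinguishes G p P P' ∧
    ∀ q : GSep V, cliqueDistinguishes G q P P' → sepOrder p ≤ sepOrder q

section Order

variable {α : Type*}

theorem sepLE_refl (p : GSep α) : sepLE p p := ⟨subset_rfl, subset_rfl⟩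

theorem sepLE_trans {p q r : GSep α} (hpq : sepLE p q) (hqr : sepLE q r) : sepLE p r :=
  ⟨hpq.1.trans hqr.1, hqr.2.trans hpq.2⟩

theorem sepLE_sepInv {p q : GSep α} (h : sepLE p q) : sepLE (sepInv q) (sepInv p) :=
  ⟨h.2, h.1⟩

theorem sepNested_of_sepLE {p q : GSep α} (h : sepLE p q) : sepNested p q := Or.inl h

theorem sepNested_refl (p : GSep α) : sepNested p p := sepNested_of_sepLE (sepLE_refl p)

theorem sepNested_symm {p q : GSep α} (h : sepNested p q) : sepNested q p := by
  rcases h with h | h | h | h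
  · exact Or.inr (Or.inr (Or.inr (sepLE_sepInv h)))
  · exact Or.inr (Or.inl (sepLE_sepInv h))
  · exact Or.inr (Or.inr (Or.inl (sepLE_sepInv h)))
  · exact Or.inl (sepLE_sepInv h)

theorem sepNested_sepInv_left {p q : GSep α} : sepNested (sepInv p) q ↔ sepNested p q := by
  unfold sepNested
  tauto

theorem sepNested_sepInv_right {p q : GSep α} : sepNested p (sepInv q) ↔ sepNested p q := by
  unfold sepNested
  tauto

variable [DecidableEq α]

theorem sepMeet_le_left (p q : GSep α) : sepLE (sepMeet p q) p :=
  ⟨Finset.inter_subset_left, Finset.subset_union_left⟩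

theorem sepMeet_le_right (p q : GSep α) : sepLE (sepMeet p q) q :=
  ⟨Finset.inter_subset_right, Finset.subset_union_right⟩

theorem le_sepMeet {t p q : GSep α} (hp : sepLE t p) (hq : sepLE t q) : sepLE t (sepMeet p q) :=
  ⟨Finset.subset_inter hp.1 hq.1, Finset.union_subset hp.2 hq.2⟩

theorem sepOrder_sepInv (p : GSep α) : sepOrder (sepInv p) = sepOrder p := by
  simp only [sepOrder, sepInv, Finset.inter_comm]

theorem sepNested_sepMeet {r s t : GSep α} (hrs : ¬ sepNested r s)
    (hr : sepNested t r) (hs : sepNested t s) : sepNested t (sepMeet r s) := by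
  have of_below : ∀ x, sepLE (sepMeet r s) x →
      sepLE t (sepInv x) ∨ sepLE (sepInv t) (sepInv x) → sepNested t (sepMeet r s) := by
    rintro x hx (h | h)
    · exact Or.inr (Or.inl (sepLE_trans h (sepLE_sepInv hx)))
    · exact Or.inr (Or.inr (Or.inr (sepLE_trans h (sepLE_sepInv hx))))
  rcases hr with hr | hr | hr | hr <;> try exact of_below r (sepMeet_le_left r s) (by tauto)
  all_goals rcases hs with hs | hs | hs | hs <;>
    try exact of_below s (sepMeet_le_right r s) (by tauto)
  · exact Or.inl (le_sepMeet hr hs)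
  · exact absurd (Or.inr (Or.inr (Or.inl (sepLE_sepInv (sepLE_trans (sepLE_sepInv hs) hr))))) hrs
  · exact absurd (Or.inr (Or.inr (Or.inl (sepLE_trans (sepLE_sepInv hr) hs)))) hrs
  · exact Or.inr (Or.inr (Or.inl (le_sepMeet hr hs)))

theorem sepMeet_separator_subset {r s : GSep α} (hrs : r.1 ∩ r.2 ⊆ s.2) :
    (sepMeet r s).1 ∩ (sepMeet r s).2 ⊆ s.1 ∩ s.2 := by
  intro x hx
  have := @hrs x
  simp only [sepMeet, Finset.mem_inter, Finset.mem_union] at hx this ⊢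
  tauto

def IsMeetCorner (c r s : GSep α) : Prop :=
  ∃ r' s', (r' = r ∨ r' = sepInv r) ∧ (s' = s ∨ s' = sepInv s) ∧ c = sepMeet r' s'

theorem IsMeetCorner.of_sepInv_right {c r s : GSep α} (h : IsMeetCorner c r (sepInv s)) :
    IsMeetCorner c r s := by
  obtain ⟨r', s', hr', hs', rfl⟩ := h
  exact ⟨r', s', hr', hs'.symm, rfl⟩

theorem IsMeetCorner.sepNested_left {c r s : GSep α} (h : IsMeetCorner c r s) :
    sepNested c r := by
  obtain ⟨r', s', hr' | hr', -, rfl⟩ := h <;> subst hr'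
  · exact sepNested_of_sepLE (sepMeet_le_left _ _)
  · exact sepNested_sepInv_right.mp (sepNested_of_sepLE (sepMeet_le_left _ _))

theorem IsMeetCorner.sepNested {c r s t : GSep α} (h : IsMeetCorner c r s)
    (hrs : ¬ sepNested r s) (hr : sepNested t r) (hs : sepNested t s) : sepNested t c := by
  obtain ⟨r', s', hr' | hr', hs' | hs', rfl⟩ := h <;> subst hr' hs' <;>
    exact sepNested_sepMeet (by simpa only [sepNested_sepInv_left, sepNested_sepInv_right])
      (by simpa only [sepNested_sepInv_right]) (by simpa only [sepNested_sepInv_right])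

open Classical in
theorem card_filter_not_sepNested_meetCorner_lt {N : Finset (GSep α)}
    (hN : ∀ p ∈ N, ∀ q ∈ N, sepNested p q) {r s c : GSep α} (hr : r ∈ N)
    (hrs : ¬ sepNested r s) (hc : IsMeetCorner c r s) :
    (N.filter (¬ sepNested c ·)).card < (N.filter (¬ sepNested s ·)).card := by
  have hsub : N.filter (¬ sepNested c ·) ⊆ (N.filter (¬ sepNested s ·)).erase r := by
    intro x hx
    obtain ⟨hxN, hxc⟩ := Finset.mem_filter.mp hx
    refine Finset.mem_erase.mpr ⟨fun hxr => hxc (hxr ▸ hc.sepNested_left), ?_⟩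
    exact Finset.mem_filter.mpr ⟨hxN, fun hsx =>
      hxc (sepNested_symm (hc.sepNested hrs (hN x hxN r hr) (sepNested_symm hsx)))⟩
  exact (Finset.card_le_card hsub).trans_lt
    (Finset.card_erase_lt_of_mem (Finset.mem_filter.mpr ⟨hr, fun h => hrs (sepNested_symm h)⟩))

end Order

section Graph

variable {G : SimpleGraph V}

theorem IsSep.mem_or_mem_s13 {s : GSep V} (hs : IsSep G s) (x : V) : x ∈ s.1 ∨ x ∈ s.2 :=
  Finset.mem_union.mp (hs.1 ▸ Finset.mem_univ x)

theorem IsSep.sepInv {p : GSep V} (hp : IsSep G p) : IsSep G (sepInv p) :=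
  ⟨(Finset.union_comm _ _).trans hp.1,
    fun a b hab ha1 ha2 hb1 hb2 => hp.2 b a hab.symm hb1 hb2 ha1 ha2⟩

theorem IsSep.sepMeet {p q : GSep V} (hp : IsSep G p) (hq : IsSep G q) :
    IsSep G (sepMeet p q) := by
  refine ⟨Finset.eq_univ_iff_forall.mpr fun x => ?_, fun a b hab ha1 ha2 hb1 hb2 => ?_⟩
  · have := hp.mem_or_mem_s13 x
    have := hq.mem_or_mem_s13 x
    simp only [_root_.sepMeet, Finset.mem_union, Finset.mem_inter]
    tauto
  · simp only [_root_.sepMeet, Finset.mem_union, Finset.mem_inter, not_or, not_and] at *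
    by_cases hbp : b ∈ p.1
    · exact hq.2 a b hab ha1.2 ha2.2 ((hq.mem_or_mem_s13 b).resolve_left (hb2 hbp)) (hb2 hbp)
    · exact hp.2 a b hab ha1.1 ha2.1 ((hp.mem_or_mem_s13 b).resolve_left hbp) hbp

theorem IsSep.subset_or_subset_of_isClique_s13 {s : GSep V} (hs : IsSep G s) {K : Finset V}
    (hK : G.IsClique (K : Set V)) : K ⊆ s.1 ∨ K ⊆ s.2 := by
  by_contra! h
  obtain ⟨⟨x, hxK, hx1⟩, ⟨y, hyK, hy2⟩⟩ := And.intro (Finset.not_subset.mp h.1)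
    (Finset.not_subset.mp h.2)
  have hx2 := (hs.mem_or_mem_s13 x).resolve_left hx1
  have hy1 := (hs.mem_or_mem_s13 y).resolve_right hy2
  exact hs.2 y x (hK hyK hxK fun hyx => hx1 (hyx ▸ hy1)) hy1 hy2 hx2 hx1

theorem IsCliqueSep.sepInv {p : GSep V} (hp : IsCliqueSep G p) : IsCliqueSep G (sepInv p) :=
  ⟨hp.1.sepInv, by simpa only [_root_.sepInv, Finset.inter_comm] using hp.2⟩

theorem IsCliqueSep.sepMeet_of_separator_subset {r s : GSep V} (hr : IsCliqueSep G r)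
    (hs : IsCliqueSep G s) (hrs : r.1 ∩ r.2 ⊆ s.2) :
    IsCliqueSep G (sepMeet r s) ∧ sepOrder (sepMeet r s) ≤ sepOrder s :=
  ⟨⟨hr.1.sepMeet hs.1, hs.2.subset (Finset.coe_subset.mpr (sepMeet_separator_subset hrs))⟩,
    Finset.card_le_card (sepMeet_separator_subset hrs)⟩

theorem sepMeet_sepInv_corners {r s : GSep V} (hr : IsSep G r) (hrs : r.1 ∩ r.2 ⊆ s.2) :
    sepMeet (sepInv (sepMeet r s)) (sepInv (sepMeet (sepInv r) s)) = sepInv s := by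
  ext x <;> have hx := hr.mem_or_mem_s13 x <;> have hxs := @hrs x <;>
    simp only [sepMeet, sepInv, Finset.mem_inter, Finset.mem_union] at hx hxs ⊢ <;> tauto

end Graph

section Profiles

variable {G : SimpleGraph V} {k k' : ℕ} {P P' : Set (GSep V)}

theorem CliqueProfile.mem_of_sepLE (hP : CliqueProfile G k P) {c w : GSep V} (hw : w ∈ P)
    (hc : IsCliqueSep G c) (hck : sepOrder c < k) (hcw : sepLE c w) : c ∈ P := by
  rcases (hP.2.1 c hc hck).1 with h | h
  · exact h
  · by_cases hcw' : c = w
    · exact hcw' ▸ hw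
    · exact absurd ⟨hcw, hcw'⟩ (hP.2.2.1 _ h w hw)

theorem cliqueDistinguishes.symm {p : GSep V} (h : cliqueDistinguishes G p P P') :
    cliqueDistinguishes G p P' P :=
  ⟨h.1, h.2.symm.imp And.symm And.symm⟩

theorem cliqueEffDist.symm {p : GSep V} (h : cliqueEffDist G p P P') : cliqueEffDist G p P' P :=
  ⟨h.1.symm, fun q hq => h.2 q hq.symm⟩

theorem cliqueEffDist.sepInv {p : GSep V} (h : cliqueEffDist G p P P') :
    cliqueEffDist G (sepInv p) P P' :=
  ⟨⟨h.1.1.sepInv, h.1.2.symm⟩, fun q hq => sepOrder_sepInv p ▸ h.2 q hq⟩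

theorem exists_cliqueEffDist (h : ∃ c, cliqueDistinguishes G c P P') :
    ∃ p, cliqueEffDist G p P P' := by
  obtain ⟨p, hp, hmin⟩ := (measure sepOrder).wf.has_min _ h
  exact ⟨p, hp, fun q hq => not_lt.mp (hmin q hq)⟩

theorem cliqueEffDist_of_sepLE (hP : CliqueProfile G k P) (hP' : CliqueProfile G k' P')
    {s c : GSep V} (hs : cliqueEffDist G s P P') (hsP : s ∈ P) (hsP' : sepInv s ∈ P')
    (hc : IsCliqueSep G c) (hcs : sepLE c s) (hord : sepOrder c ≤ sepOrder s)
    (hcP' : c ∉ P') :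
    cliqueEffDist G c P P' := by
  have hck : sepOrder c < k := hord.trans_lt (hP.1 s hsP).2
  have hck' : sepOrder c < k' := hord.trans_lt (sepOrder_sepInv s ▸ (hP'.1 _ hsP').2)
  have hcP : c ∈ P := hP.mem_of_sepLE hsP hc hck hcs
  have hcP'inv : sepInv c ∈ P' := (hP'.2.1 c hc hck').1.resolve_left hcP'
  exact ⟨⟨hc, Or.inl ⟨hcP, hcP'inv⟩⟩, fun q hq => hord.trans (hs.2 q hq)⟩

theorem exists_meetCorner_cliqueEffDist_of_mem (hP : CliqueProfile G k P)
    (hP' : CliqueProfile G k' P') {r s : GSep V} (hr : IsCliqueSep G r)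
    (hs : cliqueEffDist G s P P') (hsP : s ∈ P) (hsP' : sepInv s ∈ P')
    (hrs : r.1 ∩ r.2 ⊆ s.2) :
    ∃ c, IsMeetCorner c r s ∧ cliqueEffDist G c P P' := by
  obtain ⟨hc₁, hord₁⟩ := hr.sepMeet_of_separator_subset hs.1.1 hrs
  obtain ⟨hc₂, hord₂⟩ := hr.sepInv.sepMeet_of_separator_subset hs.1.1
    ((Finset.inter_comm _ _).trans_subset hrs)
  by_cases h₁ : sepMeet r s ∈ P'
  · by_cases h₂ : sepMeet (sepInv r) s ∈ P'
    · refine absurd hsP' ?_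
      rw [← sepMeet_sepInv_corners hr.1 hrs]
      exact hP'.2.2.2 _ h₁ _ h₂
    · exact ⟨_, ⟨sepInv r, s, Or.inr rfl, Or.inl rfl, rfl⟩,
        cliqueEffDist_of_sepLE hP hP' hs hsP hsP' hc₂ (sepMeet_le_right _ _) hord₂ h₂⟩
  · exact ⟨_, ⟨r, s, Or.inl rfl, Or.inl rfl, rfl⟩,
      cliqueEffDist_of_sepLE hP hP' hs hsP hsP' hc₁ (sepMeet_le_right _ _) hord₁ h₁⟩

theorem exists_meetCorner_cliqueEffDist (hP : CliqueProfile G k P)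
    (hP' : CliqueProfile G k' P') {r s : GSep V} (hr : IsCliqueSep G r)
    (hs : cliqueEffDist G s P P') : ∃ c, IsMeetCorner c r s ∧ cliqueEffDist G c P P' := by
  suffices h : ∀ s, cliqueEffDist G s P P' → r.1 ∩ r.2 ⊆ s.2 →
      ∃ c, IsMeetCorner c r s ∧ cliqueEffDist G c P P' by
    rcases hs.1.1.1.subset_or_subset_of_isClique_s13 hr.2 with hrs | hrs
    · obtain ⟨c, hc, hce⟩ := h (sepInv s) hs.sepInv hrs
      exact ⟨c, hc.of_sepInv_right, hce⟩
    · exact h s hs hrs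
  intro s hs hrs
  rcases hs.1.2 with ⟨hsP, hsP'⟩ | ⟨hsP', hsP⟩
  · exact exists_meetCorner_cliqueEffDist_of_mem hP hP' hr hs hsP hsP' hrs
  · obtain ⟨c, hc, hce⟩ :=
      exists_meetCorner_cliqueEffDist_of_mem hP' hP hr hs.symm hsP hsP' hrs
    exact ⟨c, hc, hce.symm⟩

end Profiles

section Construction

variable {G : SimpleGraph V}

theorem exists_cliqueEffDist_forall_sepNested {N : Finset (GSep V)}
    (hNsep : ∀ p ∈ N, IsCliqueSep G p) (hN : ∀ p ∈ N, ∀ q ∈ N, sepNested p q)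
    {k k' : ℕ} {P P' : Set (GSep V)} (hP : CliqueProfile G k P) (hP' : CliqueProfile G k' P')
    (hdist : ∃ c, cliqueDistinguishes G c P P') :
    ∃ p, cliqueEffDist G p P P' ∧ ∀ q ∈ N, sepNested p q := by
  classical
  obtain ⟨s, hs, hmin⟩ := (measure fun p => (N.filter (¬ sepNested p ·)).card).wf.has_min
    {p | cliqueEffDist G p P P'} (exists_cliqueEffDist hdist)
  refine ⟨s, hs, fun r hr => by_contra fun hsr => ?_⟩
  obtain ⟨c, hc, hce⟩ := exists_meetCorner_cliqueEffDist hP hP' (hNsep r hr) hs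
  exact hmin c hce (card_filter_not_sepNested_meetCorner_lt hN hr
    (fun h => hsr (sepNested_symm h)) hc)

theorem exists_nested_finset_cliqueEffDist (T : Finset (Set (GSep V) × Set (GSep V)))
    (hT : ∀ t ∈ T, (∃ k, CliqueProfile G k t.1) ∧ (∃ k', CliqueProfile G k' t.2) ∧
      ∃ c, cliqueDistinguishes G c t.1 t.2) :
    ∃ N : Finset (GSep V),
      (∀ p ∈ N, IsCliqueSep G p) ∧ (∀ p ∈ N, ∀ q ∈ N, sepNested p q) ∧
      ∀ t ∈ T, ∃ p ∈ N, cliqueEffDist G p t.1 t.2 := by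
  induction T using Finset.induction_on with
  | empty => exact ⟨∅, by simp, by simp, by simp⟩
  | insert t T _ ih =>
    obtain ⟨N, hNsep, hN, hNeff⟩ := ih fun u hu => hT u (Finset.mem_insert_of_mem hu)
    obtain ⟨⟨k, hP⟩, ⟨k', hP'⟩, hdist⟩ := hT t (Finset.mem_insert_self t T)
    obtain ⟨a, ha, haN⟩ := exists_cliqueEffDist_forall_sepNested hNsep hN hP hP' hdist
    refine ⟨insert a N, ?_, ?_, ?_⟩
    · simpa only [Finset.forall_mem_insert] using ⟨ha.1.1, hNsep⟩
    · simp only [Finset.forall_mem_insert]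
      exact ⟨⟨sepNested_refl a, haN⟩, fun p hp => ⟨sepNested_symm (haN p hp), hN p hp⟩⟩
    · simp only [Finset.forall_mem_insert]
      exact ⟨⟨a, Finset.mem_insert_self a N, ha⟩, fun u hu =>
        (hNeff u hu).imp fun p hp => ⟨Finset.mem_insert_of_mem hp.1, hp.2⟩⟩

end Construction

/-- **Every finite graph has a nested set of clique separations efficiently
distinguishing all of its distinguishable profiles of clique separations.** -/
theorem clique_tree_of_tangles (G : SimpleGraph V) :
    ∃ N : Set (GSep V),
      (∀ p ∈ N, IsCliqueSep G p) ∧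
      (∀ p ∈ N, ∀ q ∈ N, sepNested p q) ∧
      ∀ (k k' : ℕ) (P P' : Set (GSep V)),
        CliqueProfile G k P → CliqueProfile G k' P' →
        (∃ c, cliqueDistinguishes G c P P') →
        ∃ p ∈ N, cliqueEffDist G p P P' := by
  let D : Set (Set (GSep V) × Set (GSep V)) := {t | (∃ k, CliqueProfile G k t.1) ∧
    (∃ k', CliqueProfile G k' t.2) ∧ ∃ c, cliqueDistinguishes G c t.1 t.2}
  obtain ⟨N, hNsep, hN, hNeff⟩ := exists_nested_finset_cliqueEffDist D.toFinite.toFinset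
    fun t => D.toFinite.mem_toFinset.mp
  refine ⟨N, hNsep, hN, fun k k' P P' hP hP' hdist => ?_⟩
  exact hNeff (P, P') (D.toFinite.mem_toFinset.mpr ⟨⟨k, hP⟩, ⟨k', hP'⟩, hdist⟩)
end

section
/- (Canonical Splinter Lemma) Let U be a universe of separations and I a finite index set with a partial order ≼. There is a map 𝒜 ↦ N(𝒜), defined on all families 𝒜 = (A_i | i ∈ I) of nonempty *-closed subsets of U that splinter hierarchically with respect to ≼, such that N(𝒜) is a nested subset of U meeting every A_i, and such that N is canonical: for every automorphism φ of U (an order-isomorphism of the lattice U commuting with the involution), if φ(𝒜) := (φ(A_i) | i ∈ I) splinters hierarchically with respect to ≼, then N(φ(𝒜)) = φ(N(𝒜)). -/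
/-!
Canonical Splinter Lemma: for every family of nonempty `*`-closed subsets of a
universe of separations that splinters hierarchically there is a nested set
meeting every member of the family, and this nested set can be chosen
canonically, i.e. equivariantly under automorphisms of the universe.
-/

variable {U : Type*}

/-- `c` is a corner separation of `r` and `s`: a meet of orientations of `r`
and `s`, or the involution of such a meet. -/
def IsCornerM [Lattice U] (star : U → U) (c r s : U) : Prop :=
  ∃ r' s', (r' = r ∨ r' = star r) ∧ (s' = s ∨ s' = star s) ∧
    (c = r' ⊓ s' ∨ c = star (r' ⊓ s'))

/-- The corner separations `c₁` and `c₂` of `r` and `s` are from different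
sides of `r`: for orientations with `c₁ = r' ⊓ s'`, some orientation of `c₂`
equals `star r' ⊓ s'` or `star r' ⊓ star s'`. -/
def DiffSides [Lattice U] (star : U → U) (r s c₁ c₂ : U) : Prop :=
  ∃ r' s', (r' = r ∨ r' = star r) ∧ (s' = s ∨ s' = star s) ∧
    (c₁ = r' ⊓ s' ∨ c₁ = star (r' ⊓ s')) ∧
    (c₂ = star r' ⊓ s' ∨ c₂ = star (star r' ⊓ s') ∨
     c₂ = star r' ⊓ star s' ∨ c₂ = star (star r' ⊓ star s'))

/-- A family `A` of subsets of `U` splinters hierarchically with respect to a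
partial order on its index set. -/
def SplintersHier [Lattice U] (star : U → U) {I : Type*} [PartialOrder I]
    (A : I → Set U) : Prop :=
  ∀ i j : I, ∀ a ∈ A i, ∀ b ∈ A j,
    (i < j →
      (∃ c, IsCornerM star c a b ∧ c ∈ A j) ∨
      (∃ c₁ c₂, DiffSides star a b c₁ c₂ ∧ c₁ ∈ A i ∧ c₂ ∈ A i)) ∧
    (¬ i < j → ¬ j < i →
      ∃ c₁ c₂, ((DiffSides star a b c₁ c₂ ∧ c₁ ∈ A i) ∨
                (DiffSides star b a c₁ c₂ ∧ c₁ ∈ A j)) ∧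
        c₂ ∈ A i ∪ A j)

/-!
Fix a linear extension `i₁, i₂, …` of `≼`. Splintering with `i = j` forces the maximal elements of
`A i₁` to be pairwise nested: if `a` is maximal in the `*`-closed set `A i₁` and the corner `*a ⊓ t`
lies in it, then so does `a ⊔ *t ≥ a`, whence `*t ≤ a`. Shrink every `A j` to its members nested
with all these maximal elements. By the fish lemma (a separation nested with two crossing
separations is nested with their corners) the shrunken family still splinters hierarchically, and it
stays nonempty at every later index: a member of `A j` crossing as few of the maximal elements as
possible crosses none, since otherwise its corner with a crossing maximal element `e`, taken on the
side of `e`, would cross fewer. Recurse along the extension. The construction uses only the order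
and the involution of `U`, and the extension depends on `I` alone, so it commutes with
automorphisms.
-/

theorem exists_list_pairwise_not_lt (I : Type*) [Finite I] [PartialOrder I] :
    ∃ L : List I, (∀ i, i ∈ L) ∧ L.Pairwise (fun i j => ¬ j < i) := by
  have : Fintype (LinearExtension I) := Fintype.ofFinite I
  let L : List (LinearExtension I) := Finset.univ.sort (· ≤ ·)
  have hmem : ∀ i, i ∈ L := fun i => (Finset.mem_sort _).mpr (Finset.mem_univ i)
  have hsorted : L.Pairwise (· ≤ ·) := Finset.pairwise_sort _ _
  have hstrict : StrictMono (toLinearExtension : I →o LinearExtension I) :=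
    toLinearExtension.monotone.strictMono_of_injective fun _ _ => id
  exact ⟨L, hmem, hsorted.imp fun {i j} hij (hji : j < i) => (hstrict hji).not_ge hij⟩

namespace OrderReversingInvolution

variable [Lattice U] {star : U → U}

theorem star_star_s15 (h : OrderReversingInvolution star) (s : U) : star (star s) = s := h.1 s

theorem star_le_star_iff (h : OrderReversingInvolution star) {r s : U} :
    star s ≤ star r ↔ r ≤ s :=
  (h.2 r s).symm

theorem star_le_iff (h : OrderReversingInvolution star) {r s : U} :
    star r ≤ s ↔ star s ≤ r := by
  rw [← h.star_le_star_iff, h.star_star_s15]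

theorem le_star_iff (h : OrderReversingInvolution star) {r s : U} :
    r ≤ star s ↔ s ≤ star r := by
  rw [← h.star_le_star_iff, h.star_star_s15]

theorem star_inf (h : OrderReversingInvolution star) (x y : U) :
    star (x ⊓ y) = star x ⊔ star y := by
  refine le_antisymm ?_ (sup_le (h.star_le_star_iff.mpr inf_le_left)
    (h.star_le_star_iff.mpr inf_le_right))
  rw [h.star_le_iff]
  exact le_inf (h.star_le_iff.mp le_sup_left) (h.star_le_iff.mp le_sup_right)

end OrderReversingInvolution

namespace Separation

variable [Lattice U] {star : U → U}

theorem nested_comm (h : OrderReversingInvolution star) {a b : U} :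
    Nested star a b ↔ Nested star b a := by
  unfold Nested
  rw [h.le_star_iff, h.star_le_iff, ← h.star_le_star_iff (r := a) (s := b),
    h.star_le_star_iff (r := b) (s := a)]
  tauto

theorem nested_star_left_iff (h : OrderReversingInvolution star) {a b : U} :
    Nested star (star a) b ↔ Nested star a b := by
  unfold Nested
  rw [h.star_star_s15]
  tauto

theorem nested_star_right_iff (h : OrderReversingInvolution star) {a b : U} :
    Nested star a (star b) ↔ Nested star a b := by
  unfold Nested
  rw [h.star_star_s15]
  tauto

theorem nested_iff_of_orientation (h : OrderReversingInvolution star) {a b u v : U}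
    (hu : u = a ∨ u = star a) (hv : v = b ∨ v = star b) :
    Nested star u v ↔ Nested star a b := by
  rcases hu with rfl | rfl <;> rcases hv with rfl | rfl <;>
    simp only [nested_star_left_iff h, nested_star_right_iff h]

theorem nested_of_le_orientation (h : OrderReversingInvolution star) {e u x : U}
    (hu : u = e ∨ u = star e) (hx : x ≤ u) : Nested star e x := by
  rcases hu with rfl | rfl
  · exact Or.inr (Or.inr (Or.inr (h.star_le_star_iff.mpr hx)))
  · exact Or.inr (Or.inl (h.le_star_iff.mp hx))

theorem exists_orientation_le_of_nested (h : OrderReversingInvolution star) {a b : U}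
    (hab : Nested star a b) :
    ∃ a' b', (a' = a ∨ a' = star a) ∧ (b' = b ∨ b' = star b) ∧ b' ≤ a' := by
  rcases hab with hle | hle | hle | hle
  · exact ⟨star a, star b, Or.inr rfl, Or.inr rfl, h.star_le_star_iff.mpr hle⟩
  · exact ⟨star a, b, Or.inr rfl, Or.inl rfl, h.le_star_iff.mp hle⟩
  · exact ⟨a, star b, Or.inl rfl, Or.inr rfl, h.star_le_iff.mp hle⟩
  · exact ⟨a, b, Or.inl rfl, Or.inl rfl, h.star_le_star_iff.mp hle⟩

theorem nested_inf_of_not_nested (h : OrderReversingInvolution star) {u v f : U}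
    (huv : ¬ Nested star u v) (hfu : Nested star f u) (hfv : Nested star f v) :
    Nested star f (u ⊓ v) := by
  have hu : star u ≤ star (u ⊓ v) := h.star_le_star_iff.mpr inf_le_left
  have hv : star v ≤ star (u ⊓ v) := h.star_le_star_iff.mpr inf_le_right
  rcases hfu with hfu | hfu | hfu | hfu
  · rcases hfv with hfv | hfv | hfv | hfv
    · exact Or.inl (le_inf hfu hfv)
    · exact Or.inr (Or.inl (hfv.trans hv))
    · exact absurd (Or.inr (Or.inr (Or.inl (h.star_le_iff.mpr
        ((h.star_le_iff.mp hfv).trans hfu))))) huv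
    · exact Or.inr (Or.inr (Or.inr (hfv.trans hv)))
  · exact Or.inr (Or.inl (hfu.trans hu))
  · rcases hfv with hfv | hfv | hfv | hfv
    · exact absurd (Or.inr (Or.inr (Or.inl ((h.star_le_iff.mp hfu).trans hfv)))) huv
    · exact Or.inr (Or.inl (hfv.trans hv))
    · exact Or.inr (Or.inr (Or.inl (le_inf hfu hfv)))
    · exact Or.inr (Or.inr (Or.inr (hfv.trans hv)))
  · exact Or.inr (Or.inr (Or.inr (hfu.trans hu)))

theorem star_orientation (h : OrderReversingInvolution star) {a r : U}
    (hr : r = a ∨ r = star a) : star r = a ∨ star r = star a := by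
  rcases hr with rfl | rfl
  · exact Or.inr rfl
  · exact Or.inl (h.star_star_s15 a)

theorem mem_of_orientation_mem (h : OrderReversingInvolution star) {S : Set U}
    (hS : ∀ x ∈ S, star x ∈ S) {c x : U} (hc : c ∈ S) (hcx : c = x ∨ c = star x) : x ∈ S := by
  rcases hcx with rfl | rfl
  · exact hc
  · simpa only [h.star_star_s15] using hS _ hc

theorem IsCornerM.symm {a b c : U} (hc : IsCornerM star c a b) : IsCornerM star c b a := by
  obtain ⟨r, s, hr, hs, hcrs⟩ := hc
  exact ⟨s, r, hs, hr, inf_comm r s ▸ hcrs⟩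

theorem IsCornerM.nested_of_not_nested (h : OrderReversingInvolution star) {a b c e : U}
    (hc : IsCornerM star c a b) (hab : ¬ Nested star a b) (hea : Nested star e a)
    (heb : Nested star e b) : Nested star e c := by
  obtain ⟨r, s, hr, hs, hcrs⟩ := hc
  have hrs : Nested star e (r ⊓ s) :=
    nested_inf_of_not_nested h (fun hrs => hab ((nested_iff_of_orientation h hr hs).mp hrs))
      ((nested_iff_of_orientation h (Or.inl rfl) hr).mpr hea)
      ((nested_iff_of_orientation h (Or.inl rfl) hs).mpr heb)
  exact (nested_iff_of_orientation h (Or.inl rfl) hcrs).mpr hrs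

theorem DiffSides.isCornerM_fst {a b c₁ c₂ : U} (hd : DiffSides star a b c₁ c₂) :
    IsCornerM star c₁ a b := by
  obtain ⟨r, s, hr, hs, hc₁, -⟩ := hd
  exact ⟨r, s, hr, hs, hc₁⟩

theorem DiffSides.isCornerM_snd (h : OrderReversingInvolution star) {a b c₁ c₂ : U}
    (hd : DiffSides star a b c₁ c₂) : IsCornerM star c₂ a b := by
  obtain ⟨r, s, hr, hs, -, hc₂⟩ := hd
  rcases hc₂ with hc₂ | hc₂ | hc₂ | hc₂
  · exact ⟨star r, s, star_orientation h hr, hs, Or.inl hc₂⟩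
  · exact ⟨star r, s, star_orientation h hr, hs, Or.inr hc₂⟩
  · exact ⟨star r, star s, star_orientation h hr, star_orientation h hs, Or.inl hc₂⟩
  · exact ⟨star r, star s, star_orientation h hr, star_orientation h hs, Or.inr hc₂⟩

theorem star_le_of_maximal_of_inf_mem (h : OrderReversingInvolution star) {S : Set U}
    (hS : ∀ x ∈ S, star x ∈ S) {a t : U} (ha : Maximal (· ∈ S) a) (hat : star a ⊓ t ∈ S) :
    star t ≤ a := by
  have hsup : a ⊔ star t ∈ S := by
    simpa only [h.star_inf, h.star_star_s15] using hS _ hat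
  exact le_sup_right.trans (ha.2 hsup le_sup_left)

theorem nested_of_maximal_of_diffSides (h : OrderReversingInvolution star) {S : Set U}
    (hS : ∀ x ∈ S, star x ∈ S) {a b c₁ c₂ : U} (ha : Maximal (· ∈ S) a)
    (hd : DiffSides star a b c₁ c₂) (hc₁ : c₁ ∈ S) (hc₂ : c₂ ∈ S) : Nested star a b := by
  obtain ⟨r, s, hr, hs, hc₁r, hc₂r⟩ := hd
  have of_inf_mem : ∀ t, (t = b ∨ t = star b) → star a ⊓ t ∈ S → Nested star a b :=
    fun t ht hat => (nested_iff_of_orientation h (Or.inl rfl) (star_orientation h ht)).mp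
      (nested_of_le_orientation h (Or.inl rfl) (star_le_of_maximal_of_inf_mem h hS ha hat))
  rcases hr with rfl | rfl
  · rcases hc₂r with hc | hc | hc | hc
    · exact of_inf_mem s hs (mem_of_orientation_mem h hS hc₂ (Or.inl hc))
    · exact of_inf_mem s hs (mem_of_orientation_mem h hS hc₂ (Or.inr hc))
    · exact of_inf_mem _ (star_orientation h hs) (mem_of_orientation_mem h hS hc₂ (Or.inl hc))
    · exact of_inf_mem _ (star_orientation h hs) (mem_of_orientation_mem h hS hc₂ (Or.inr hc))
  · exact of_inf_mem s hs (mem_of_orientation_mem h hS hc₁ hc₁r)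

theorem nested_map_iff (φ : U ≃o U) (hφ : ∀ s, φ (star s) = star (φ s)) {a b : U} :
    Nested star (φ a) (φ b) ↔ Nested star a b := by
  simp only [Nested, ← hφ, φ.le_iff_le]

theorem setOf_maximal_image (φ : U ≃o U) (S : Set U) :
    {x | Maximal (· ∈ φ '' S) x} = φ '' {x | Maximal (· ∈ S) x} := by
  rw [φ.image_setOfPred_maximal, φ.image_eq_preimage_symm]
  rfl

section Family

variable {I : Type*}

def restrictNested (star : U → U) (E : Set U) (A : I → Set U) : I → Set U :=
  fun j => {x ∈ A j | ∀ e ∈ E, Nested star e x}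

theorem restrictNested_star_mem (h : OrderReversingInvolution star) {E : Set U} {A : I → Set U}
    (hA : ∀ i, ∀ a ∈ A i, star a ∈ A i) (i : I) :
    ∀ a ∈ restrictNested star E A i, star a ∈ restrictNested star E A i :=
  fun _ ha => ⟨hA i _ ha.1, fun e he => (nested_star_right_iff h).mpr (ha.2 e he)⟩

theorem restrictNested_image (φ : U ≃o U) (hφ : ∀ s, φ (star s) = star (φ s)) (E : Set U)
    (A : I → Set U) :
    restrictNested star (φ '' E) (fun j => φ '' A j) = fun j => φ '' restrictNested star E A j := by
  funext j
  ext x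
  simp only [restrictNested, Set.mem_ofPred_eq, Set.mem_image]
  constructor
  · rintro ⟨⟨x, hx, rfl⟩, hnested⟩
    exact ⟨x, ⟨hx, fun e he => (nested_map_iff φ hφ).mp (hnested _ ⟨e, he, rfl⟩)⟩, rfl⟩
  · rintro ⟨x, ⟨hx, hnested⟩, rfl⟩
    exact ⟨⟨x, hx, rfl⟩, by
      rintro _ ⟨e, he, rfl⟩
      exact (nested_map_iff φ hφ).mpr (hnested e he)⟩

def canonicalNested (star : U → U) : List I → (I → Set U) → Set U
  | [], _ => ∅
  | i :: L, A => {e | Maximal (· ∈ A i) e} ∪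
      canonicalNested star L (restrictNested star {e | Maximal (· ∈ A i) e} A)

theorem canonicalNested_image (φ : U ≃o U) (hφ : ∀ s, φ (star s) = star (φ s)) :
    ∀ (L : List I) (A : I → Set U),
      canonicalNested star L (fun j => φ '' A j) = φ '' canonicalNested star L A
  | [], _ => (Set.image_empty φ).symm
  | i :: L, A => by
    simp only [canonicalNested, setOf_maximal_image, restrictNested_image φ hφ,
      canonicalNested_image φ hφ L, Set.image_union]

theorem exists_mem_of_mem_canonicalNested {x : U} :
    ∀ {L : List I} {A : I → Set U}, x ∈ canonicalNested star L A → ∃ i, x ∈ A i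
  | [], _, hx => hx.elim
  | i :: _, _, Or.inl hx => ⟨i, hx.1⟩
  | _ :: _, _, Or.inr hx =>
    let ⟨j, hj⟩ := exists_mem_of_mem_canonicalNested hx
    ⟨j, hj.1⟩

end Family

section Hierarchy

variable {I : Type*} [PartialOrder I] {A : I → Set U}

/-- The condition that `SplintersHier star A` imposes on `a ∈ A i` and `b ∈ A j`. -/
def SplintersAt (star : U → U) (A : I → Set U) (i j : I) (a b : U) : Prop :=
  (i < j →
    (∃ c, IsCornerM star c a b ∧ c ∈ A j) ∨
    (∃ c₁ c₂, DiffSides star a b c₁ c₂ ∧ c₁ ∈ A i ∧ c₂ ∈ A i)) ∧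
  (¬ i < j → ¬ j < i →
    ∃ c₁ c₂, ((DiffSides star a b c₁ c₂ ∧ c₁ ∈ A i) ∨
              (DiffSides star b a c₁ c₂ ∧ c₁ ∈ A j)) ∧
      c₂ ∈ A i ∪ A j)

/-- If `b' ≤ a'` for orientations `a'`, `b'`, then `b'` and `star a'` are corners of `a` and `b`
from different sides. -/
theorem splintersAt_of_nested (h : OrderReversingInvolution star)
    (hA : ∀ i, ∀ a ∈ A i, star a ∈ A i) {i j : I} {a b : U} (ha : a ∈ A i) (hb : b ∈ A j)
    (hab : Nested star a b) : SplintersAt star A i j a b := by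
  obtain ⟨a', b', ha', hb', hle⟩ := exists_orientation_le_of_nested h hab
  have hb'A : b' ∈ A j := by
    rcases hb' with rfl | rfl
    exacts [hb, hA j _ hb]
  have ha'A : star a' ∈ A i := by
    rcases ha' with rfl | rfl
    · exact hA i _ ha
    · rwa [h.star_star_s15]
  have hinf : b' ⊓ a' = b' := inf_eq_left.mpr hle
  have hinf' : star b' ⊓ star a' = star a' := inf_eq_right.mpr (h.star_le_star_iff.mpr hle)
  refine ⟨fun _ => Or.inl ⟨b', ⟨a', b', ha', hb', Or.inl (inf_comm a' b' ▸ hinf.symm)⟩, hb'A⟩,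
    fun _ _ => ⟨b', star a', Or.inr ⟨?_, hb'A⟩, Or.inl ha'A⟩⟩
  exact ⟨b', a', hb', ha', Or.inl hinf.symm, Or.inr (Or.inr (Or.inl hinf'.symm))⟩

theorem SplintersAt.mono (h : OrderReversingInvolution star) {B : I → Set U} {i j : I} {a b : U}
    (hAB : ∀ k c, c ∈ A k → IsCornerM star c a b → c ∈ B k) (hab : SplintersAt star A i j a b) :
    SplintersAt star B i j a b := by
  obtain ⟨hlt, hinc⟩ := hab
  refine ⟨fun hij => ?_, fun hij hji => ?_⟩
  · rcases hlt hij with ⟨c, hc, hcA⟩ | ⟨c₁, c₂, hd, hc₁, hc₂⟩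
    · exact Or.inl ⟨c, hc, hAB j c hcA hc⟩
    · exact Or.inr ⟨c₁, c₂, hd, hAB i c₁ hc₁ (DiffSides.isCornerM_fst hd),
        hAB i c₂ hc₂ (DiffSides.isCornerM_snd h hd)⟩
  · obtain ⟨c₁, c₂, hd, hc₂⟩ := hinc hij hji
    have hc₂ab : IsCornerM star c₂ a b := by
      rcases hd with ⟨hd, -⟩ | ⟨hd, -⟩
      exacts [DiffSides.isCornerM_snd h hd, IsCornerM.symm (DiffSides.isCornerM_snd h hd)]
    refine ⟨c₁, c₂, hd.imp (fun hd => ⟨hd.1, hAB i c₁ hd.2 (DiffSides.isCornerM_fst hd.1)⟩)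
      (fun hd => ⟨hd.1, hAB j c₁ hd.2 (IsCornerM.symm (DiffSides.isCornerM_fst hd.1))⟩),
      hc₂.imp (hAB i c₂ · hc₂ab) (hAB j c₂ · hc₂ab)⟩

theorem splintersHier_restrictNested (h : OrderReversingInvolution star)
    (hsp : SplintersHier star A) (hA : ∀ i, ∀ a ∈ A i, star a ∈ A i) (E : Set U) :
    SplintersHier star (restrictNested star E A) := by
  intro i j a ha b hb
  by_cases hab : Nested star a b
  · exact splintersAt_of_nested h (restrictNested_star_mem h hA) ha hb hab
  · refine SplintersAt.mono h (fun k c hc hcab => ⟨hc, fun e he => ?_⟩) (hsp i j a ha.1 b hb.1)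
    exact IsCornerM.nested_of_not_nested h hcab hab (ha.2 e he) (hb.2 e he)

theorem nested_of_maximal (h : OrderReversingInvolution star) (hsp : SplintersHier star A)
    (hA : ∀ i, ∀ a ∈ A i, star a ∈ A i) {i : I} {a b : U} (ha : Maximal (· ∈ A i) a)
    (hb : Maximal (· ∈ A i) b) : Nested star a b := by
  obtain ⟨c₁, c₂, hd | hd, hc₂⟩ := (hsp i i a ha.1 b hb.1).2 (lt_irrefl i) (lt_irrefl i)
  · exact nested_of_maximal_of_diffSides h (hA i) ha hd.1 hd.2 ((Set.union_self _).subset hc₂)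
  · exact (nested_comm h).mp
      (nested_of_maximal_of_diffSides h (hA i) hb hd.1 hd.2 ((Set.union_self _).subset hc₂))

theorem exists_inf_mem_of_not_nested (h : OrderReversingInvolution star)
    (hsp : SplintersHier star A) (hA : ∀ i, ∀ a ∈ A i, star a ∈ A i) {i j : I} (hji : ¬ j < i)
    {e a : U} (he : Maximal (· ∈ A i) e) (ha : a ∈ A j) (hea : ¬ Nested star e a) :
    ∃ u v, (u = e ∨ u = star e) ∧ (v = a ∨ v = star a) ∧ u ⊓ v ∈ A j := by
  suffices ∃ c ∈ A j, IsCornerM star c e a by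
    obtain ⟨c, hc, u, v, hu, hv, hcuv⟩ := this
    exact ⟨u, v, hu, hv, mem_of_orientation_mem h (hA j) hc hcuv⟩
  obtain ⟨hlt, hinc⟩ := hsp i j e he.1 a ha
  by_cases hij : i < j
  · rcases hlt hij with ⟨c, hc, hcA⟩ | ⟨c₁, c₂, hd, hc₁, hc₂⟩
    · exact ⟨c, hcA, hc⟩
    · exact absurd (nested_of_maximal_of_diffSides h (hA i) he hd hc₁ hc₂) hea
  · obtain ⟨c₁, c₂, ⟨hd, hc₁⟩ | ⟨hd, hc₁⟩, hc₂⟩ := hinc hij hji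
    · rcases hc₂ with hc₂ | hc₂
      · exact absurd (nested_of_maximal_of_diffSides h (hA i) he hd hc₁ hc₂) hea
      · exact ⟨c₂, hc₂, DiffSides.isCornerM_snd h hd⟩
    · exact ⟨c₁, hc₁, IsCornerM.symm (DiffSides.isCornerM_fst hd)⟩

theorem restrictNested_maximal_nonempty [Finite U] (h : OrderReversingInvolution star)
    (hsp : SplintersHier star A) (hA : ∀ i, ∀ a ∈ A i, star a ∈ A i) {i j : I} (hji : ¬ j < i)
    (hne : (A j).Nonempty) : (restrictNested star {e | Maximal (· ∈ A i) e} A j).Nonempty := by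
  set E := {e | Maximal (· ∈ A i) e}
  obtain ⟨a, ha, hmin⟩ :=
    (A j).toFinite.exists_minimalFor (fun x => {e ∈ E | ¬ Nested star e x}) (A j) hne
  refine ⟨a, ha, fun e he => by_contra fun hea => ?_⟩
  obtain ⟨u, v, hu, hv, huv⟩ := exists_inf_mem_of_not_nested h hsp hA hji he ha hea
  have hcross : ¬ Nested star u v := fun huv => hea ((nested_iff_of_orientation h hu hv).mp huv)
  have hfewer : {f ∈ E | ¬ Nested star f (u ⊓ v)} ⊆ {f ∈ E | ¬ Nested star f a} :=
    fun f ⟨hf, hfuv⟩ => ⟨hf, fun hfa => hfuv (nested_inf_of_not_nested h hcross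
      ((nested_iff_of_orientation h (Or.inl rfl) hu).mpr (nested_of_maximal h hsp hA hf he))
      ((nested_iff_of_orientation h (Or.inl rfl) hv).mpr hfa))⟩
  exact (hmin huv hfewer ⟨he, hea⟩).2 (nested_of_le_orientation h hu inf_le_left)

theorem canonicalNested_nested (h : OrderReversingInvolution star) :
    ∀ (L : List I) {A : I → Set U}, SplintersHier star A → (∀ i, ∀ a ∈ A i, star a ∈ A i) →
      ∀ x ∈ canonicalNested star L A, ∀ y ∈ canonicalNested star L A, Nested star x y
  | [], _, _, _ => fun _ hx => hx.elim
  | i :: L, A, hsp, hA => by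
    set E := {e | Maximal (· ∈ A i) e}
    have hrest := canonicalNested_nested h L (splintersHier_restrictNested h hsp hA E)
      (restrictNested_star_mem h hA)
    have hmax_rest : ∀ e ∈ E, ∀ x ∈ canonicalNested star L (restrictNested star E A),
        Nested star e x := fun e he x hx =>
      let ⟨_, hx⟩ := exists_mem_of_mem_canonicalNested hx
      hx.2 e he
    rintro x (hx | hx) y (hy | hy)
    · exact nested_of_maximal h hsp hA hx hy
    · exact hmax_rest x hx y hy
    · exact (nested_comm h).mp (hmax_rest y hy x hx)
    · exact hrest x hx y hy

theorem exists_mem_canonicalNested [Finite U] (h : OrderReversingInvolution star) :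
    ∀ {L : List I}, L.Pairwise (fun i j => ¬ j < i) → ∀ {A : I → Set U},
      SplintersHier star A → (∀ i, ∀ a ∈ A i, star a ∈ A i) → (∀ i ∈ L, (A i).Nonempty) →
      ∀ i ∈ L, ∃ a ∈ A i, a ∈ canonicalNested star L A
  | [], _, _, _, _, _ => fun _ hi => absurd hi List.not_mem_nil
  | i :: L, hL, A, hsp, hA, hne => by
    obtain ⟨hfirst, hL⟩ := List.pairwise_cons.mp hL
    intro j hj
    rcases List.mem_cons.mp hj with rfl | hj
    · obtain ⟨a, ha⟩ := (A j).toFinite.exists_maximal (hne j List.mem_cons_self)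
      exact ⟨a, ha.1, Or.inl ha⟩
    · have hne_rest : ∀ k ∈ L, (restrictNested star {e | Maximal (· ∈ A i) e} A k).Nonempty :=
        fun k hk => restrictNested_maximal_nonempty h hsp hA (hfirst k hk)
          (hne k (List.mem_cons_of_mem i hk))
      obtain ⟨a, ha, haN⟩ := exists_mem_canonicalNested h hL
        (splintersHier_restrictNested h hsp hA _) (restrictNested_star_mem h hA) hne_rest j hj
      exact ⟨a, ha.1, Or.inr haN⟩

end Hierarchy

end Separation

open Separation

/-- **Canonical Splinter Lemma.** -/
theorem canonical_splinter_lemma [Lattice U] [Fintype U]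
    (star : U → U) (hstar : OrderReversingInvolution star)
    {I : Type*} [Fintype I] [PartialOrder I] :
    ∃ N : (I → Set U) → Set U,
      ∀ A : I → Set U, (∀ i, (A i).Nonempty) →
        (∀ i, ∀ a ∈ A i, star a ∈ A i) → SplintersHier star A →
        ((∀ a ∈ N A, ∀ b ∈ N A, Nested star a b) ∧
         (∀ i, ∃ a ∈ A i, a ∈ N A) ∧
         ∀ φ : U ≃o U, (∀ s : U, φ (star s) = star (φ s)) →
           SplintersHier star (fun i => φ '' A i) →
           N (fun i => φ '' A i) = φ '' N A) := by
  obtain ⟨L, hL, hLpair⟩ := exists_list_pairwise_not_lt I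
  refine ⟨canonicalNested star L, fun A hne hA hsp => ⟨?_, fun i => ?_, fun φ hφ _ => ?_⟩⟩
  · exact canonicalNested_nested hstar L hsp hA
  · exact exists_mem_canonicalNested hstar hLpair hsp hA (fun i _ => hne i) i (hL i)
  · exact canonicalNested_image φ hφ L A
end

section
/- Let r and s be two circle separations of a finite cyclically ordered set V. If r and s cross, then all four corner separations of r and s are again circle separations. -/
/-!
If two circle separations of a finite cyclically ordered set cross, then all
four of their corner separations are again circle separations.
-/

/-- A cyclic interval of `ZMod n`: the empty set, all of `ZMod n`, or a set of
the form `{a, a+1, …, a+k}`. -/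
def CyclicInterval {n : ℕ} (A : Set (ZMod n)) : Prop :=
  A = ∅ ∨ A = Set.univ ∨
    ∃ (a : ZMod n) (k : ℕ), A = (fun i : ℕ => a + (i : ZMod n)) '' {i | i ≤ k}

/-- An oriented bipartition-candidate of `ZMod n`: a pair of subsets. -/
abbrev Bip (n : ℕ) := Set (ZMod n) × Set (ZMod n)

/-- The involution `(A,B) ↦ (B,A)`. -/
def bipInv {n : ℕ} (p : Bip n) : Bip n := (p.2, p.1)

/-- The partial order `(A,B) ≤ (C,D)` iff `A ⊆ C` and `B ⊇ D`. -/
def bipLE {n : ℕ} (p q : Bip n) : Prop := p.1 ⊆ q.1 ∧ q.2 ⊆ p.2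

/-- The join `(A,B) ∨ (C,D) = (A ∪ C, B ∩ D)`. -/
def bipJoin {n : ℕ} (p q : Bip n) : Bip n := (p.1 ∪ q.1, p.2 ∩ q.2)

/-- The meet `(A,B) ∧ (C,D) = (A ∩ C, B ∪ D)`. -/
def bipMeet {n : ℕ} (p q : Bip n) : Bip n := (p.1 ∩ q.1, p.2 ∪ q.2)

/-- `(A,B)` is a bipartition of `ZMod n`. -/
def IsBip {n : ℕ} (p : Bip n) : Prop :=
  p.1 ∩ p.2 = ∅ ∧ p.1 ∪ p.2 = Set.univ

/-- `(A,B)` is a circle separation: a bipartition of `ZMod n` into two cyclic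
intervals. -/
def IsCircleSep {n : ℕ} (p : Bip n) : Prop :=
  IsBip p ∧ CyclicInterval p.1 ∧ CyclicInterval p.2

/-- Two bipartitions are nested if they have `bipLE`-comparable orientations. -/
def bipNested {n : ℕ} (p q : Bip n) : Prop :=
  bipLE p q ∨ bipLE p (bipInv q) ∨ bipLE (bipInv p) q ∨ bipLE (bipInv p) (bipInv q)

/-!
A circle separation is `(A, Aᶜ)` with `A` a cyclic interval, and the corner `r' ∨ s'` of two
orientations `(A, Aᶜ)`, `(C, Cᶜ)` is `(A ∪ C, (A ∪ C)ᶜ)`. Crossing means that no orientation of `r`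
lies below one of `s`; in particular `A ⊈ Cᶜ`, i.e. `A` and `C` meet. The union of two meeting
arcs of the circle is again an arc (or the whole circle), and so is the complement of an arc.
-/

namespace ZMod

variable {n : ℕ}

/-- The arc `{a, a+1, …, a+k}`; it is all of `ZMod n` once `n ≤ k + 1`. -/
def arc (a : ZMod n) (k : ℕ) : Set (ZMod n) := {x | (x - a).val ≤ k}

@[simp]
lemma mem_arc {a x : ZMod n} {k : ℕ} : x ∈ arc a k ↔ (x - a).val ≤ k := Iff.rfl

variable [NeZero n]

lemma image_add_natCast_eq_arc (a : ZMod n) (k : ℕ) :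
    (fun i : ℕ => a + (i : ZMod n)) '' {i | i ≤ k} = arc a k := by
  ext x
  constructor
  · rintro ⟨i, hi, rfl⟩
    simpa [val_natCast] using (Nat.mod_le i n).trans hi
  · intro hx
    exact ⟨(x - a).val, hx, by simp⟩

lemma arc_eq_univ {a : ZMod n} {k : ℕ} (hk : n ≤ k + 1) : arc a k = Set.univ :=
  Set.eq_univ_of_forall fun x => by have := (x - a).val_lt; simp only [mem_arc]; omega

lemma compl_arc {a : ZMod n} {k : ℕ} (hk : k + 1 < n) :
    (arc a k)ᶜ = arc (a + ((k + 1 : ℕ) : ZMod n)) (n - k - 2) := by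
  ext x
  have hval : ((k + 1 : ℕ) : ZMod n).val = k + 1 := val_cast_of_lt hk
  have hsum : (x - (a + ((k + 1 : ℕ) : ZMod n))) + ((k + 1 : ℕ) : ZMod n) = x - a := by ring
  rw [Set.mem_compl_iff, mem_arc, mem_arc, not_le, ← hsum]
  generalize x - (a + ((k + 1 : ℕ) : ZMod n)) = u
  have hu := u.val_lt
  rcases lt_or_ge (u.val + ((k + 1 : ℕ) : ZMod n).val) n with h | h
  · rw [val_add_of_lt h, hval]; omega
  · rw [val_add_of_le h, hval]; omega

lemma mem_arc_or_mem_arc_of_mem {x y w : ZMod n} {k l : ℕ} (hx : w ∈ arc x k)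
    (hy : w ∈ arc y l) : y ∈ arc x k ∨ x ∈ arc y l := by
  simp only [mem_arc] at *
  rcases le_total (w - y).val (w - x).val with h | h
  · left
    rw [show y - x = (w - x) - (w - y) by ring, val_sub h]
    omega
  · right
    rw [show x - y = (w - y) - (w - x) by ring, val_sub h]
    omega

lemma arc_union_arc_of_mem {x y : ZMod n} {k l : ℕ} (hy : y ∈ arc x k) :
    arc x k ∪ arc y l = arc x (max k ((y - x).val + l)) := by
  rw [mem_arc] at hy
  ext z
  simp only [Set.mem_union, mem_arc, le_max_iff]
  constructor
  · rintro (h | h)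
    · exact Or.inl h
    · right
      calc (z - x).val = ((z - y) + (y - x)).val := by rw [sub_add_sub_cancel]
        _ ≤ (z - y).val + (y - x).val := val_add_le _ _
        _ ≤ (y - x).val + l := by omega
  · rintro (h | h)
    · exact Or.inl h
    · by_cases hzk : (z - x).val ≤ k
      · exact Or.inl hzk
      · right
        rw [show z - y = (z - x) - (y - x) by ring, val_sub (by omega)]
        omega

end ZMod

open ZMod

section CyclicInterval

variable {n : ℕ} [NeZero n] {A C : Set (ZMod n)}

lemma cyclicInterval_arc (a : ZMod n) (k : ℕ) : CyclicInterval (arc a k) :=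
  Or.inr (Or.inr ⟨a, k, (image_add_natCast_eq_arc a k).symm⟩)

lemma CyclicInterval.eq_empty_or_eq_arc (hA : CyclicInterval A) :
    A = ∅ ∨ ∃ (a : ZMod n) (k : ℕ), A = arc a k := by
  rcases hA with h | h | ⟨a, k, h⟩
  · exact Or.inl h
  · exact Or.inr ⟨0, n - 1, by rw [h, arc_eq_univ (by omega)]⟩
  · exact Or.inr ⟨a, k, by rw [h, image_add_natCast_eq_arc]⟩

lemma CyclicInterval.compl (hA : CyclicInterval A) : CyclicInterval Aᶜ := by
  rcases hA.eq_empty_or_eq_arc with rfl | ⟨a, k, rfl⟩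
  · exact Or.inr (Or.inl Set.compl_empty)
  · rcases lt_or_ge (k + 1) n with hk | hk
    · rw [compl_arc hk]
      exact cyclicInterval_arc _ _
    · rw [arc_eq_univ hk, Set.compl_univ]
      exact Or.inl rfl

lemma CyclicInterval.union (hA : CyclicInterval A) (hC : CyclicInterval C)
    (hAC : (A ∩ C).Nonempty) : CyclicInterval (A ∪ C) := by
  rcases hA.eq_empty_or_eq_arc with rfl | ⟨x, k, rfl⟩
  · simp at hAC
  rcases hC.eq_empty_or_eq_arc with rfl | ⟨y, l, rfl⟩
  · simp at hAC
  obtain ⟨w, hwx, hwy⟩ := hAC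
  rcases mem_arc_or_mem_arc_of_mem hwx hwy with h | h
  · rw [arc_union_arc_of_mem h]
    exact cyclicInterval_arc _ _
  · rw [Set.union_comm, arc_union_arc_of_mem h]
    exact cyclicInterval_arc _ _

end CyclicInterval

section CircleSep

variable {n : ℕ} {p q : Bip n}

lemma isBip_iff_isCompl : IsBip p ↔ IsCompl p.1 p.2 := by
  rw [IsBip, isCompl_iff, Set.disjoint_iff_inter_eq_empty, codisjoint_iff]
  rfl

lemma IsCircleSep.snd_eq_compl (hp : IsCircleSep p) : p.2 = p.1ᶜ :=
  (isBip_iff_isCompl.mp hp.1).compl_eq.symm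

lemma isCircleSep_bipInv (hp : IsCircleSep p) : IsCircleSep (bipInv p) :=
  ⟨isBip_iff_isCompl.mpr (isBip_iff_isCompl.mp hp.1).symm, hp.2.2, hp.2.1⟩

lemma isCircleSep_compl [NeZero n] {A : Set (ZMod n)} (hA : CyclicInterval A) :
    IsCircleSep (A, Aᶜ) :=
  ⟨isBip_iff_isCompl.mpr isCompl_compl, hA, hA.compl⟩

lemma bipNested_of_bipLE {r s : Bip n} (hp : p = r ∨ p = bipInv r) (hq : q = s ∨ q = bipInv s)
    (h : bipLE p q) : bipNested r s := by
  rcases hp with rfl | rfl <;> rcases hq with rfl | rfl <;> simp [bipNested, h]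

lemma inter_nonempty_of_not_bipLE_bipInv (hp : IsCircleSep p) (hq : IsCircleSep q)
    (h : ¬ bipLE p (bipInv q)) : (p.1 ∩ q.1).Nonempty := by
  by_contra hpq
  rw [Set.not_nonempty_iff_eq_empty, ← Set.disjoint_iff_inter_eq_empty,
    ← Set.subset_compl_iff_disjoint_right] at hpq
  apply h
  rw [bipLE, bipInv, hp.snd_eq_compl, hq.snd_eq_compl]
  exact ⟨hpq, Set.subset_compl_comm.mp hpq⟩

lemma isCircleSep_bipJoin [NeZero n] (hp : IsCircleSep p) (hq : IsCircleSep q)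
    (hpq : (p.1 ∩ q.1).Nonempty) : IsCircleSep (bipJoin p q) := by
  have hjoin : bipJoin p q = (p.1 ∪ q.1, (p.1 ∪ q.1)ᶜ) := by
    rw [bipJoin, hp.snd_eq_compl, hq.snd_eq_compl, Set.compl_union]
  rw [hjoin]
  exact isCircleSep_compl (hp.2.1.union hq.2.1 hpq)

end CircleSep

/-- **If two circle separations cross, then all four of their corner
separations are circle separations.** -/
theorem circle_sep_corners {n : ℕ} (hn : 0 < n) (r s : Bip n)
    (hr : IsCircleSep r) (hs : IsCircleSep s) (hcross : ¬ bipNested r s) :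
    ∀ r' s' : Bip n, (r' = r ∨ r' = bipInv r) → (s' = s ∨ s' = bipInv s) →
      IsCircleSep (bipJoin r' s') := by
  intro r' s' hr' hs'
  have : NeZero n := ⟨hn.ne'⟩
  have hr'sep : IsCircleSep r' := by rcases hr' with rfl | rfl; exacts [hr, isCircleSep_bipInv hr]
  have hs'sep : IsCircleSep s' := by rcases hs' with rfl | rfl; exacts [hs, isCircleSep_bipInv hs]
  have hs'inv : bipInv s' = s ∨ bipInv s' = bipInv s := by
    rcases hs' with rfl | rfl
    exacts [Or.inr rfl, Or.inl rfl]
  exact isCircleSep_bipJoin hr'sep hs'sep <| inter_nonempty_of_not_bipLE_bipInv hr'sep hs'sep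
    fun hle => hcross (bipNested_of_bipLE hr' hs'inv hle)
end
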